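/- arXiv:1610.09320 — 6 statements merged into one kernel-verified Lean document; each statement's English description precedes it below -/
import Mathlib

section
/- An edge e = u→v is irredundant in the net (G,s,t) if and only if there exist a path from s to u and a path from v to t that are vertex-disjoint. -/
/-- A directed multigraph: a type of vertices, a type of edges,
and source/target maps. -/
structure MultiDigraph (V E : Type) where
  src : E → V
  tgt : E → V

namespace MultiDigraph

variable {V E : Type}

/-- `G.IsWalk u p v` : the list of edges `p` forms a walk from `u` to `v`. -/
def IsWalk (G : MultiDigraph V E) : V → List E → V → Prop
  | u, [], v => u = v
  | u, e :: p, v => G.src e = u ∧ IsWalk G (G.tgt e) p v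

/-- The list of vertices visited by a walk starting at `u` with edges `p`. -/
def walkVerts (G : MultiDigraph V E) : V → List E → List V
  | u, [] => [u]
  | u, e :: p => u :: walkVerts G (G.tgt e) p

/-- A simple path: a walk repeating no vertex. -/
def IsSimplePath (G : MultiDigraph V E) (u : V) (p : List E) (v : V) : Prop :=
  G.IsWalk u p v ∧ (G.walkVerts u p).Nodup

/-- The set of simple `st`-paths using only edges from `F`. -/
def SP (G : MultiDigraph V E) (F : Set E) (s t : V) : Set (List E) :=
  {p | G.IsSimplePath s p t ∧ ∀ e ∈ p, e ∈ F}

/-- An edge is irredundant if it lies on some simple `st`-path. -/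
def EdgeIrredundant (G : MultiDigraph V E) (s t : V) (e : E) : Prop :=
  ∃ p, G.IsSimplePath s p t ∧ e ∈ p

/-- A vertex is irredundant if it lies on some simple `st`-path. -/
def VertexIrredundant (G : MultiDigraph V E) (s t : V) (x : V) : Prop :=
  ∃ p, G.IsSimplePath s p t ∧ x ∈ G.walkVerts s p

/-- A net is `st`-connected if every vertex lies on some `st`-path. -/
def STConnected (G : MultiDigraph V E) (s t : V) : Prop :=
  ∀ x : V, ∃ p, G.IsWalk s p t ∧ x ∈ G.walkVerts s p

end MultiDigraph

/-!
A simple `st`-path through `e` splits at `e` into a path `s ⇝ src e` and a path `tgt e ⇝ t`,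
disjoint because the whole path repeats no vertex. Conversely, shortcutting the two given
walks to simple paths only shrinks their vertex sets, so they stay disjoint and their
concatenation through `e` is a simple `st`-path.
-/

namespace MultiDigraph

variable {V E : Type} (G : MultiDigraph V E)

lemma isWalk_append {u v : V} {p q : List E} :
    G.IsWalk u (p ++ q) v ↔ ∃ w, G.IsWalk u p w ∧ G.IsWalk w q v := by
  induction p generalizing u with
  | nil => simp [IsWalk]
  | cons a p ih => simp only [List.cons_append, IsWalk, ih, and_assoc, exists_and_left]

lemma isWalk_append_cons {u v : V} {p q : List E} {e : E} :
    G.IsWalk u (p ++ e :: q) v ↔ G.IsWalk u p (G.src e) ∧ G.IsWalk (G.tgt e) q v := by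
  rw [isWalk_append]
  constructor
  · rintro ⟨w, hp, rfl, hq⟩
    exact ⟨hp, hq⟩
  · rintro ⟨hp, hq⟩
    exact ⟨G.src e, hp, rfl, hq⟩

lemma walkVerts_append_cons (u : V) (p : List E) (e : E) (q : List E) :
    G.walkVerts u (p ++ e :: q) = G.walkVerts u p ++ G.walkVerts (G.tgt e) q := by
  induction p generalizing u with
  | nil => rfl
  | cons a p ih => simp only [List.cons_append, walkVerts, ih]

lemma isSimplePath_append_cons {u v : V} {p q : List E} {e : E} :
    G.IsSimplePath u (p ++ e :: q) v ↔
      G.IsSimplePath u p (G.src e) ∧ G.IsSimplePath (G.tgt e) q v ∧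
        (G.walkVerts u p).Disjoint (G.walkVerts (G.tgt e) q) := by
  simp only [IsSimplePath, isWalk_append_cons, walkVerts_append_cons, List.nodup_append']
  tauto

lemma exists_isWalk_suffix_of_mem_walkVerts {u v x : V} {p : List E}
    (hp : G.IsWalk u p v) (hx : x ∈ G.walkVerts u p) :
    ∃ q, G.IsWalk x q v ∧ G.walkVerts x q <:+ G.walkVerts u p := by
  induction p generalizing u with
  | nil =>
    obtain rfl : x = u := List.mem_singleton.1 hx
    exact ⟨[], hp, List.suffix_refl _⟩
  | cons a p ih =>
    rcases List.mem_cons.1 hx with rfl | hx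
    · exact ⟨a :: p, hp, List.suffix_refl _⟩
    · obtain ⟨q, hq, hsuf⟩ := ih hp.2 hx
      exact ⟨q, hq, hsuf.trans (List.suffix_cons _ _)⟩

lemma exists_isSimplePath_of_isWalk {u v : V} {p : List E} (hp : G.IsWalk u p v) :
    ∃ q, G.IsSimplePath u q v ∧ G.walkVerts u q ⊆ G.walkVerts u p := by
  induction p generalizing u with
  | nil => exact ⟨[], ⟨hp, List.nodup_singleton u⟩, List.Subset.refl _⟩
  | cons a p ih =>
    obtain ⟨q, ⟨hq, hnd⟩, hsub⟩ := ih hp.2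
    by_cases hu : u ∈ G.walkVerts (G.tgt a) q
    · -- the walk returns to `u`: cut off the loop
      obtain ⟨r, hr, hsuf⟩ := G.exists_isWalk_suffix_of_mem_walkVerts hq hu
      exact ⟨r, ⟨hr, hsuf.sublist.nodup hnd⟩,
        List.Subset.trans hsuf.subset (List.Subset.trans hsub (List.subset_cons_self _ _))⟩
    · exact ⟨a :: q, ⟨⟨hp.1, hq⟩, List.nodup_cons.2 ⟨hu, hnd⟩⟩,
        List.cons_subset_cons _ hsub⟩

end MultiDigraph

open MultiDigraph in
/-- An edge `e = u→v` is irredundant in `(G,s,t)` iff there exist a path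
`s ⇝ u` and a path `v ⇝ t` that are vertex-disjoint. -/
theorem stmt1 {V E : Type} (G : MultiDigraph V E) (s t : V) (e : E) :
    G.EdgeIrredundant s t e ↔
      ∃ p q, G.IsWalk s p (G.src e) ∧ G.IsWalk (G.tgt e) q t ∧
        ∀ x ∈ G.walkVerts s p, x ∉ G.walkVerts (G.tgt e) q := by
  constructor
  · rintro ⟨r, hr, he⟩
    obtain ⟨p, q, rfl⟩ := List.append_of_mem he
    obtain ⟨⟨hp, -⟩, ⟨hq, -⟩, hdisj⟩ := G.isSimplePath_append_cons.1 hr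
    exact ⟨p, q, hp, hq, fun x hx hx' => hdisj hx hx'⟩
  · rintro ⟨p, q, hp, hq, hdisj⟩
    obtain ⟨p', hp', hsubp⟩ := G.exists_isSimplePath_of_isWalk hp
    obtain ⟨q', hq', hsubq⟩ := G.exists_isSimplePath_of_isWalk hq
    refine ⟨p' ++ e :: q', G.isSimplePath_append_cons.2 ⟨hp', hq', ?_⟩, by simp⟩
    exact fun x hx hx' => hdisj x (hsubp hx) (hsubq hx')
end

section
/- Let G' ⊆ G with SP(G') = SP(G). Then G is vulnerable if and only if G' is vulnerable. -/
namespace MultiDigraph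

variable {V E : Type} [DecidableEq E]

/-- The flow induced on an edge by a flow on simple `st`-paths. -/
noncomputable def edgeFlow (G : MultiDigraph V E) (F : Set E) (s t : V)
    (φ : List E → ℝ) (e : E) : ℝ :=
  ∑' p : G.SP F s t, if e ∈ (p : List E) then φ p else 0

/-- The latency of a path under a flow: the sum of the edge latencies at the
induced edge flows. -/
noncomputable def pathLatency (G : MultiDigraph V E) (F : Set E) (s t : V)
    (l : E → ℝ → ℝ) (φ : List E → ℝ) (p : List E) : ℝ :=
  (p.map (fun e => l e (G.edgeFlow F s t φ e))).sum

/-- A Wardrop flow for the instance given by the subgraph `F` of `G`, traffic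
value `r` and latencies `l`. -/
structure IsWardrop (G : MultiDigraph V E) (F : Set E) (s t : V) (r : ℝ)
    (l : E → ℝ → ℝ) (φ : List E → ℝ) : Prop where
  nonneg : ∀ p, 0 ≤ φ p
  support : ∀ p, p ∉ G.SP F s t → φ p = 0
  value : ∑' p : G.SP F s t, φ (p : List E) = r
  equil : ∀ p q, G.IsWalk s p t → (∀ e ∈ p, e ∈ F) →
    G.IsWalk s q t → (∀ e ∈ q, e ∈ F) → 0 < φ p →
    G.pathLatency F s t l φ p ≤ G.pathLatency F s t l φ q

/-- `L` is the common latency at Wardrop equilibrium of the instance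
(`0` in case `r = 0`). -/
def EqLat (G : MultiDigraph V E) (F : Set E) (s t : V) (r : ℝ)
    (l : E → ℝ → ℝ) (L : ℝ) : Prop :=
  (r = 0 ∧ L = 0) ∨
  ∃ φ p, G.IsWardrop F s t r l φ ∧ 0 < φ p ∧ G.pathLatency F s t l φ p = L

/-- Latency functions are continuous and non-decreasing. -/
def GoodLatency {E : Type} (l : E → ℝ → ℝ) : Prop :=
  ∀ e, Continuous (l e) ∧ Monotone (l e)

/-- The (sub)net given by the edge set `F` of `G` is vulnerable: for some
traffic value, latencies and subgraph `H`, the Wardrop latency of `H` is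
strictly smaller than that of `F`. -/
def Vulnerable (G : MultiDigraph V E) (F : Set E) (s t : V) : Prop :=
  ∃ (r : ℝ) (l : E → ℝ → ℝ) (H : Set E),
    0 ≤ r ∧ GoodLatency l ∧ H ⊆ F ∧
    ∃ LG LH, G.EqLat F s t r l LG ∧ G.EqLat H s t r l LH ∧ LH < LG

end MultiDigraph


/-!
Restricting a net `G` to `G'` with the same simple `st`-paths keeps every Wardrop flow a Wardrop
flow with the same latency: the flow and its edge loads live on the common simple paths, and the
equilibrium condition for `G'` quantifies over fewer walks.

Conversely, fix a Wardrop flow of `G'` with edge costs `c` and latency `L`, and let `B v` be the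
cheapest `c`-cost of a `G'`-walk from `v` to `t`; equilibrium forces `L ≤ B s` and `B t ≤ 0`.
Edges lying on no `st`-walk of `G'` get the constant latency `B (src e) - B (tgt e)`; all others
already satisfy this bound, so by telescoping every `st`-walk of `G` costs at least `B s - B t ≥ L`.
The flow stays a Wardrop flow of `G`, and subnets of `G'` never see the changed latencies.
-/

namespace MultiDigraph

variable {V E : Type}

section Walks

variable (G : MultiDigraph V E)

def IsWalkIn (F : Set E) (u : V) (p : List E) (v : V) : Prop :=
  G.IsWalk u p v ∧ ∀ e ∈ p, e ∈ F

def LiesOnWalk (F : Set E) (s t : V) (e : E) : Prop :=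
  ∃ q, G.IsWalkIn F s q t ∧ e ∈ q

variable {G}

theorem IsWalk.append {u v w : V} {p q : List E} (hp : G.IsWalk u p v)
    (hq : G.IsWalk v q w) : G.IsWalk u (p ++ q) w := by
  induction p generalizing u with
  | nil => exact (show u = v from hp) ▸ hq
  | cons e p ih => exact ⟨hp.1, ih hp.2⟩

theorem IsWalk.exists_eq_append_cons {u v : V} {p : List E} (hp : G.IsWalk u p v) {e : E}
    (he : e ∈ p) :
    ∃ p₁ p₂, p = p₁ ++ e :: p₂ ∧ G.IsWalk u p₁ (G.src e) ∧ G.IsWalk (G.tgt e) p₂ v := by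
  induction p generalizing u with
  | nil => cases he
  | cons f p ih =>
    rcases List.mem_cons.mp he with rfl | he
    · exact ⟨[], p, rfl, hp.1.symm, hp.2⟩
    · obtain ⟨p₁, p₂, rfl, h₁, h₂⟩ := ih hp.2 he
      exact ⟨f :: p₁, p₂, rfl, ⟨hp.1, h₁⟩, h₂⟩

theorem IsWalk.sub_le_sum_of_potential {B : V → ℝ} {c : E → ℝ} {u v : V} {p : List E}
    (hp : G.IsWalk u p v) (hB : ∀ e ∈ p, B (G.src e) - B (G.tgt e) ≤ c e) :
    B u - B v ≤ (p.map c).sum := by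
  induction p generalizing u with
  | nil => simp [show u = v from hp]
  | cons e p ih =>
    have hrest := ih hp.2 fun f hf => hB f (List.mem_cons_of_mem e hf)
    have he := hB e List.mem_cons_self
    rw [hp.1] at he
    simp only [List.map_cons, List.sum_cons]
    linarith

theorem IsWalkIn.append {F : Set E} {u v w : V} {p q : List E} (hp : G.IsWalkIn F u p v)
    (hq : G.IsWalkIn F v q w) : G.IsWalkIn F u (p ++ q) w :=
  ⟨hp.1.append hq.1, fun e he => (List.mem_append.mp he).elim (hp.2 e) (hq.2 e)⟩

theorem IsWalkIn.mono {F F' : Set E} (h : F ⊆ F') {u v : V} {p : List E}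
    (hp : G.IsWalkIn F u p v) : G.IsWalkIn F' u p v :=
  ⟨hp.1, fun e he => h (hp.2 e he)⟩

theorem LiesOnWalk.exists_isWalkIn {F : Set E} {s t : V} {e : E} (he : G.LiesOnWalk F s t e) :
    e ∈ F ∧ (∃ p, G.IsWalkIn F s p (G.src e)) ∧ ∃ q, G.IsWalkIn F (G.tgt e) q t := by
  obtain ⟨w, hw, hew⟩ := he
  obtain ⟨p, q, rfl, hp, hq⟩ := hw.1.exists_eq_append_cons hew
  have hF : ∀ f ∈ p ++ e :: q, f ∈ F := hw.2
  exact ⟨hF e (by simp), ⟨p, hp, fun f hf => hF f (by simp [hf])⟩,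
    ⟨q, hq, fun f hf => hF f (by simp [hf])⟩⟩

end Walks

section WalkDist

variable (G : MultiDigraph V E) (F : Set E) (c : E → ℝ)

/-- The infimum of the `c`-costs of `F`-walks from `v` to `t` (junk `0` if there are none or
they are unbounded below). -/
noncomputable def walkDist (v t : V) : ℝ :=
  sInf ((fun w => (w.map c).sum) '' {w | G.IsWalkIn F v w t})

variable {G F c} {s t : V} {L : ℝ} (hmin : ∀ q, G.IsWalkIn F s q t → L ≤ (q.map c).sum)
include hmin

theorem bddBelow_walkCosts {v : V} {p : List E} (hp : G.IsWalkIn F s p v) :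
    BddBelow ((fun w => (w.map c).sum) '' {w | G.IsWalkIn F v w t}) := by
  refine ⟨L - (p.map c).sum, ?_⟩
  rintro _ ⟨w, hw, rfl⟩
  have := hmin _ (hp.append hw)
  rw [List.map_append, List.sum_append] at this
  linarith

theorem le_walkDist_source {p : List E} (hp : G.IsWalkIn F s p t) : L ≤ G.walkDist F c s t :=
  le_csInf ⟨_, p, hp, rfl⟩ (by rintro _ ⟨w, hw, rfl⟩; exact hmin w hw)

theorem walkDist_target_nonpos {p : List E} (hp : G.IsWalkIn F s p t) :
    G.walkDist F c t t ≤ 0 :=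
  csInf_le (bddBelow_walkCosts hmin hp) ⟨[], ⟨rfl, by simp⟩, rfl⟩

theorem walkDist_src_le_add {e : E} (he : G.LiesOnWalk F s t e) :
    G.walkDist F c (G.src e) t ≤ c e + G.walkDist F c (G.tgt e) t := by
  obtain ⟨heF, ⟨p, hp⟩, ⟨q, hq⟩⟩ := he.exists_isWalkIn
  have hbdd := bddBelow_walkCosts hmin hp
  rw [← sub_le_iff_le_add']
  refine le_csInf ⟨_, q, hq, rfl⟩ ?_
  rintro _ ⟨w, hw, rfl⟩
  have hew : G.IsWalkIn F (G.src e) (e :: w) t :=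
    ⟨⟨rfl, hw.1⟩, fun f hf => (List.mem_cons.mp hf).elim (· ▸ heF) (hw.2 f)⟩
  have := csInf_le hbdd ⟨_, hew, rfl⟩
  simp only [List.map_cons, List.sum_cons] at this
  exact sub_le_iff_le_add'.mpr this

end WalkDist

section Wardrop

variable {G : MultiDigraph V E} {s t : V}

theorem SP_inter_eq {F F' H : Set E} (hHF : H ⊆ F) (hSP : G.SP F' s t = G.SP F s t) :
    G.SP (H ∩ F') s t = G.SP H s t := by
  ext p
  refine ⟨fun ⟨hp, hpH⟩ => ⟨hp, fun e he => (hpH e he).1⟩, fun ⟨hp, hpH⟩ => ⟨hp, ?_⟩⟩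
  have hpF' : p ∈ G.SP F' s t := hSP ▸ ⟨hp, fun e he => hHF (hpH e he)⟩
  exact fun e he => ⟨hpH e he, hpF'.2 e he⟩

variable [DecidableEq E]

theorem edgeFlow_congr {F₁ F₂ : Set E} (h : G.SP F₁ s t = G.SP F₂ s t) (φ : List E → ℝ) :
    G.edgeFlow F₁ s t φ = G.edgeFlow F₂ s t φ := by
  funext e; unfold edgeFlow; rw [h]

theorem pathLatency_congr {F₁ F₂ : Set E} (h : G.SP F₁ s t = G.SP F₂ s t) (l : E → ℝ → ℝ)
    (φ : List E → ℝ) (p : List E) :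
    G.pathLatency F₁ s t l φ p = G.pathLatency F₂ s t l φ p := by
  unfold pathLatency; rw [edgeFlow_congr h φ]

theorem pathLatency_congr_latency {F : Set E} {l l' : E → ℝ → ℝ} (φ : List E → ℝ)
    {p : List E} (h : ∀ e ∈ p, l' e = l e) :
    G.pathLatency F s t l' φ p = G.pathLatency F s t l φ p := by
  unfold pathLatency
  rw [List.map_congr_left fun e he => congrFun (h e he) _]

variable {F : Set E} {r : ℝ} {l : E → ℝ → ℝ} {φ : List E → ℝ}

theorem IsWardrop.mem_SP_of_pos (hW : G.IsWardrop F s t r l φ) {p : List E} (hp : 0 < φ p) :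
    p ∈ G.SP F s t := by
  by_contra h
  exact hp.ne' (hW.support p h)

theorem IsWardrop.liesOnWalk_of_pos (hW : G.IsWardrop F s t r l φ) {p : List E}
    (hp : 0 < φ p) {e : E} (he : e ∈ p) : G.LiesOnWalk F s t e :=
  have hpSP := hW.mem_SP_of_pos hp
  ⟨p, ⟨hpSP.1.1, hpSP.2⟩, he⟩

theorem IsWardrop.of_SP_eq {F₁ : Set E} (hsub : F ⊆ F₁) (hSP : G.SP F s t = G.SP F₁ s t)
    (hW : G.IsWardrop F₁ s t r l φ) : G.IsWardrop F s t r l φ where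
  nonneg := hW.nonneg
  support p hp := hW.support p (hSP ▸ hp)
  value := hSP ▸ hW.value
  equil p q hp hpF hq hqF hφ := by
    rw [pathLatency_congr hSP, pathLatency_congr hSP]
    exact hW.equil p q hp (fun e he => hsub (hpF e he)) hq (fun e he => hsub (hqF e he)) hφ

theorem EqLat.of_SP_eq {F₁ : Set E} {L : ℝ} (hsub : F ⊆ F₁) (hSP : G.SP F s t = G.SP F₁ s t)
    (hE : G.EqLat F₁ s t r l L) : G.EqLat F s t r l L := by
  rcases hE with h | ⟨φ, p, hW, hp, rfl⟩
  · exact Or.inl h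
  · exact Or.inr ⟨φ, p, hW.of_SP_eq hsub hSP, hp, pathLatency_congr hSP l φ p⟩

theorem IsWardrop.congr_latency {l' : E → ℝ → ℝ} (h : ∀ e, G.LiesOnWalk F s t e → l' e = l e)
    (hW : G.IsWardrop F s t r l φ) : G.IsWardrop F s t r l' φ where
  nonneg := hW.nonneg
  support := hW.support
  value := hW.value
  equil p q hp hpF hq hqF hφ := by
    rw [pathLatency_congr_latency φ fun e he => h e ⟨p, ⟨hp, hpF⟩, he⟩,
      pathLatency_congr_latency φ fun e he => h e ⟨q, ⟨hq, hqF⟩, he⟩]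
    exact hW.equil p q hp hpF hq hqF hφ

theorem EqLat.congr_latency {l' : E → ℝ → ℝ} {L : ℝ}
    (h : ∀ e, G.LiesOnWalk F s t e → l' e = l e) (hE : G.EqLat F s t r l L) :
    G.EqLat F s t r l' L := by
  rcases hE with hr | ⟨φ, p, hW, hp, rfl⟩
  · exact Or.inl hr
  · exact Or.inr ⟨φ, p, hW.congr_latency h, hp,
      pathLatency_congr_latency φ fun e he => h e (hW.liesOnWalk_of_pos hp he)⟩

theorem isWardrop_of_potential (nonneg : ∀ p, 0 ≤ φ p)
    (support : ∀ p, p ∉ G.SP F s t → φ p = 0) (value : ∑' p : G.SP F s t, φ p = r) (B : V → ℝ)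
    (hB : ∀ e ∈ F, B (G.src e) - B (G.tgt e) ≤ l e (G.edgeFlow F s t φ e))
    (hused : ∀ p, 0 < φ p → G.pathLatency F s t l φ p ≤ B s - B t) :
    G.IsWardrop F s t r l φ where
  nonneg := nonneg
  support := support
  value := value
  equil p _ _ _ hq hqF hφ :=
    (hused p hφ).trans (hq.sub_le_sum_of_potential fun e he => hB e (hqF e he))

theorem EqLat.exists_extension {F' : Set E} (hSP : G.SP F' s t = G.SP F s t)
    (hl : GoodLatency l) {L : ℝ} (hE : G.EqLat F' s t r l L) :
    ∃ l' : E → ℝ → ℝ, GoodLatency l' ∧ (∀ e, G.LiesOnWalk F' s t e → l' e = l e) ∧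
      G.EqLat F s t r l' L := by
  classical
  rcases hE with h | ⟨φ, p₀, hW, hp₀, rfl⟩
  · exact ⟨l, hl, fun _ _ => rfl, Or.inl h⟩
  set c : E → ℝ := fun e => l e (G.edgeFlow F' s t φ e)
  have hp₀SP := hW.mem_SP_of_pos hp₀
  have hp₀F' : G.IsWalkIn F' s p₀ t := ⟨hp₀SP.1.1, hp₀SP.2⟩
  have hmin : ∀ q, G.IsWalkIn F' s q t → G.pathLatency F' s t l φ p₀ ≤ (q.map c).sum :=
    fun q hq => hW.equil _ _ hp₀F'.1 hp₀F'.2 hq.1 hq.2 hp₀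
  set B : V → ℝ := fun v => G.walkDist F' c v t
  set l' : E → ℝ → ℝ := fun e =>
    if G.LiesOnWalk F' s t e then l e else fun _ => B (G.src e) - B (G.tgt e)
  have hl'_eq : ∀ e, G.LiesOnWalk F' s t e → l' e = l e := fun e he => if_pos he
  have hused : ∀ p, 0 < φ p → G.pathLatency F s t l' φ p = G.pathLatency F' s t l φ p :=
    fun p hp => by
      rw [← pathLatency_congr hSP, pathLatency_congr_latency φ fun e he =>
        hl'_eq e (hW.liesOnWalk_of_pos hp he)]
  refine ⟨l', fun e => ?_, hl'_eq, Or.inr ⟨φ, p₀, isWardrop_of_potential hW.nonneg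
    (fun p hp => hW.support p (hSP ▸ hp)) (hSP ▸ hW.value) B (fun e _ => ?_) (fun p hp => ?_),
    hp₀, hused p₀ hp₀⟩⟩
  · by_cases he : G.LiesOnWalk F' s t e
    · simpa only [l', if_pos he] using hl e
    · simp only [l', if_neg he]
      exact ⟨continuous_const, monotone_const⟩
  · rw [← edgeFlow_congr hSP]
    by_cases he : G.LiesOnWalk F' s t e
    · simp only [l', if_pos he]
      exact sub_le_iff_le_add.mpr (walkDist_src_le_add hmin he)
    · simp only [l', if_neg he, le_refl]
  · have hs := le_walkDist_source hmin hp₀F'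
    have ht := walkDist_target_nonpos hmin hp₀F'
    have hp' := hW.equil _ _ (hW.mem_SP_of_pos hp).1.1 (hW.mem_SP_of_pos hp).2 hp₀F'.1
      hp₀F'.2 hp
    rw [hused p hp]
    linarith

end Wardrop

end MultiDigraph

open MultiDigraph in
/-- If `G' ⊆ G` and `SP(G') = SP(G)`, then `G` is vulnerable iff `G'` is. -/
theorem stmt5 {V E : Type} [DecidableEq E] (G : MultiDigraph V E) (s t : V)
    (F F' : Set E) (hsub : F' ⊆ F) (hSP : G.SP F' s t = G.SP F s t) :
    G.Vulnerable F s t ↔ G.Vulnerable F' s t := by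
  constructor
  · rintro ⟨r, l, H, hr, hl, hHF, LG, LH, hEG, hEH, hlt⟩
    exact ⟨r, l, H ∩ F', hr, hl, Set.inter_subset_right, LG, LH, hEG.of_SP_eq hsub hSP,
      hEH.of_SP_eq Set.inter_subset_left (SP_inter_eq hHF hSP), hlt⟩
  · rintro ⟨r, l, H, hr, hl, hHF', LG, LH, hEG, hEH, hlt⟩
    obtain ⟨l', hl', hl'_eq, hEG'⟩ := hEG.exists_extension hSP hl
    refine ⟨r, l', H, hr, hl', hHF'.trans hsub, LG, LH, hEG', ?_, hlt⟩
    exact hEH.congr_latency fun e ⟨q, hq, he⟩ => hl'_eq e ⟨q, hq.mono hHF', he⟩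
end

section
/- Let (G,s,t) be an st-connected net, C an s-minimal simple cycle of G, and ε* an entry node of C at minimum distance from s. Then there exists a shortest path p from s to ε* such that for every cycle C' containing ε* and every exit path q from a node ξ of C' to t, the path p is disjoint from q except possibly in its endpoint ε*. -/
namespace MultiDigraph

variable {V E : Type}

/-- A simple cycle based at `v` with edge list `p`: a nonempty closed walk
whose vertices (except the repeated endpoint) are all distinct. -/
def IsSimpleCycle (G : MultiDigraph V E) (v : V) (p : List E) : Prop :=
  G.IsWalk v p v ∧ p ≠ [] ∧ ((G.walkVerts v p).dropLast).Nodup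

/-- The list of (distinct) vertices of a cycle. -/
def cycleVerts (G : MultiDigraph V E) (v : V) (p : List E) : List V :=
  (G.walkVerts v p).dropLast

/-- The set of vertices of a cycle. -/
def cycleSet (G : MultiDigraph V E) (v : V) (p : List E) : Set V :=
  {x | x ∈ G.cycleVerts v p}

/-- `u` is an entry node of the vertex set `C`: `u ∈ C` and some simple path
from `s` to `u` meets `C` only in `u`. -/
def EntryNode (G : MultiDigraph V E) (s : V) (C : Set V) (u : V) : Prop :=
  u ∈ C ∧ ∃ q, G.IsSimplePath s q u ∧ ∀ x ∈ G.walkVerts s q, x ∈ C → x = u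

/-- `u` is an exit node of the vertex set `C`: `u ∈ C` and some simple path
from `u` to `t` meets `C` only in `u`. -/
def ExitNode (G : MultiDigraph V E) (t : V) (C : Set V) (u : V) : Prop :=
  u ∈ C ∧ ∃ q, G.IsSimplePath u q t ∧ ∀ x ∈ G.walkVerts u q, x ∈ C → x = u

/-- `q` is an entry path into `C` ending at `u`. -/
def IsEntryPath (G : MultiDigraph V E) (s : V) (C : Set V) (q : List E) (u : V) : Prop :=
  u ∈ C ∧ G.IsSimplePath s q u ∧ ∀ x ∈ G.walkVerts s q, x ∈ C → x = u

/-- `q` is an exit path from `C` starting at `u`. -/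
def IsExitPath (G : MultiDigraph V E) (t : V) (C : Set V) (q : List E) (u : V) : Prop :=
  u ∈ C ∧ G.IsSimplePath u q t ∧ ∀ x ∈ G.walkVerts u q, x ∈ C → x = u

/-- Length of a shortest directed walk from `u` to `v`. -/
noncomputable def dist (G : MultiDigraph V E) (u v : V) : ℕ :=
  sInf {n | ∃ p, G.IsWalk u p v ∧ p.length = n}

/-- `d_s(C)`: the minimum over `u ∈ C` of `dist s u`. -/
noncomputable def dS (G : MultiDigraph V E) (s : V) (C : Set V) : ℕ :=
  sInf {n | ∃ u ∈ C, G.dist s u = n}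

/-- `d_t(C)`: the minimum over `u ∈ C` of `dist u t`. -/
noncomputable def dT (G : MultiDigraph V E) (t : V) (C : Set V) : ℕ :=
  sInf {n | ∃ u ∈ C, G.dist u t = n}

/-- An `s`-minimal cycle: a simple cycle whose distance from `s` is minimal
among all simple cycles of `G`. -/
def SMinimal (G : MultiDigraph V E) (s v : V) (p : List E) : Prop :=
  G.IsSimpleCycle v p ∧
    ∀ v' p', G.IsSimpleCycle v' p' →
      G.dS s (G.cycleSet v p) ≤ G.dS s (G.cycleSet v' p')

end MultiDigraph


/-!
Take a shortest walk `q` from `s` to `ε`. If some vertex `x ≠ ε` of `q` also lay on an exit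
path `w` (from `ξ`) of a cycle `C'` through `ε`, then following `q` from `x` to `ε`, going
around `C'` from `ε` to `ξ`, and following `w` from `ξ` back to `x` gives a nonempty closed
walk through `x`, hence a simple cycle through `x`. But `x` is strictly closer to `s` than
`ε`, and `d(s, ε) = d_s(C)`, contradicting the `s`-minimality of `C`.
-/

namespace MultiDigraph

variable {V E : Type} {G : MultiDigraph V E}

lemma walkVerts_ne_nil (G : MultiDigraph V E) (u : V) (p : List E) : G.walkVerts u p ≠ [] := by
  cases p <;> simp [walkVerts]

lemma dropLast_walkVerts_cons (u : V) (e : E) (p : List E) :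
    (G.walkVerts u (e :: p)).dropLast = u :: (G.walkVerts (G.tgt e) p).dropLast :=
  List.dropLast_cons_of_ne_nil (G.walkVerts_ne_nil _ _)

namespace IsWalk

lemma append_s7 {u v w : V} {p q : List E} (hp : G.IsWalk u p v) (hq : G.IsWalk v q w) :
    G.IsWalk u (p ++ q) w := by
  induction p generalizing u with
  | nil => subst hp; exact hq
  | cons e p ih => exact ⟨hp.1, ih hp.2⟩

lemma exists_split_of_mem {u v x : V} {p : List E} (h : G.IsWalk u p v)
    (hx : x ∈ G.walkVerts u p) :
    ∃ p₁ p₂, p = p₁ ++ p₂ ∧ G.IsWalk u p₁ x ∧ G.IsWalk x p₂ v := by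
  induction p generalizing u with
  | nil =>
    obtain rfl : x = u := List.mem_singleton.mp hx
    exact ⟨[], [], rfl, rfl, h⟩
  | cons e p ih =>
    rcases List.mem_cons.mp hx with rfl | hx
    · exact ⟨[], e :: p, rfl, rfl, h⟩
    · obtain ⟨p₁, p₂, rfl, h₁, h₂⟩ := ih h.2 hx
      exact ⟨e :: p₁, p₂, rfl, ⟨h.1, h₁⟩, h₂⟩

lemma exists_split_of_mem_dropLast {u v x : V} {p : List E} (h : G.IsWalk u p v)
    (hx : x ∈ (G.walkVerts u p).dropLast) :
    ∃ p₁ p₂, p = p₁ ++ p₂ ∧ G.IsWalk u p₁ x ∧ G.IsWalk x p₂ v ∧ p₂ ≠ [] := by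
  induction p generalizing u with
  | nil => simp [walkVerts] at hx
  | cons e p ih =>
    rw [dropLast_walkVerts_cons, List.mem_cons] at hx
    rcases hx with rfl | hx
    · exact ⟨[], e :: p, rfl, rfl, h, List.cons_ne_nil _ _⟩
    · obtain ⟨p₁, p₂, rfl, h₁, h₂, hne⟩ := ih h.2 hx
      exact ⟨e :: p₁, p₂, rfl, ⟨h.1, h₁⟩, h₂, hne⟩

lemma exists_shorter_of_not_nodup {u v : V} {p : List E} (h : G.IsWalk u p v)
    (hnd : ¬ (G.walkVerts u p).dropLast.Nodup) :
    ∃ p', G.IsWalk u p' v ∧ p'.length < p.length ∧ p' ≠ [] := by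
  induction p generalizing u with
  | nil => simp [walkVerts] at hnd
  | cons e p ih =>
    rw [dropLast_walkVerts_cons, List.nodup_cons, not_and_or, not_not] at hnd
    rcases hnd with hmem | hnd
    · obtain ⟨p₁, p₂, rfl, -, h₂, hne⟩ := h.2.exists_split_of_mem_dropLast hmem
      exact ⟨p₂, h₂, by simp, hne⟩
    · obtain ⟨p', h', hlt, -⟩ := ih h.2 hnd
      exact ⟨e :: p', ⟨h.1, h'⟩, by simpa using hlt, List.cons_ne_nil _ _⟩

lemma exists_isSimpleCycle {x : V} {p : List E} (h : G.IsWalk x p x) (hne : p ≠ []) :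
    ∃ c, G.IsSimpleCycle x c := by
  induction hn : p.length using Nat.strong_induction_on generalizing p with
  | _ n ih =>
    by_cases hnd : (G.walkVerts x p).dropLast.Nodup
    · exact ⟨p, h, hne, hnd⟩
    · obtain ⟨p', h', hlt, hne'⟩ := h.exists_shorter_of_not_nodup hnd
      exact ih _ (hn ▸ hlt) h' hne' rfl

end IsWalk

lemma IsSimpleCycle.mem_cycleSet {x : V} {c : List E} (h : G.IsSimpleCycle x c) :
    x ∈ G.cycleSet x c := by
  obtain ⟨e, c, rfl⟩ := List.exists_cons_of_ne_nil h.2.1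
  show x ∈ (G.walkVerts x (e :: c)).dropLast
  rw [dropLast_walkVerts_cons]
  exact List.mem_cons_self

lemma IsSimpleCycle.exists_isWalk {v x y : V} {c : List E} (h : G.IsSimpleCycle v c)
    (hx : x ∈ G.cycleSet v c) (hy : y ∈ G.cycleSet v c) : ∃ r, G.IsWalk x r y := by
  obtain ⟨-, r₁, -, -, h₁⟩ := h.1.exists_split_of_mem (List.dropLast_subset _ hx)
  obtain ⟨r₂, -, -, h₂, -⟩ := h.1.exists_split_of_mem (List.dropLast_subset _ hy)
  exact ⟨r₁ ++ r₂, h₁.append_s7 h₂⟩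

lemma dist_le_length {u v : V} {p : List E} (h : G.IsWalk u p v) : G.dist u v ≤ p.length :=
  Nat.sInf_le ⟨p, h, rfl⟩

lemma exists_isWalk_length_eq_dist {u v : V} {p : List E} (h : G.IsWalk u p v) :
    ∃ q, G.IsWalk u q v ∧ q.length = G.dist u v :=
  Nat.sInf_mem (s := {n | ∃ p, G.IsWalk u p v ∧ p.length = n}) ⟨p.length, p, h, rfl⟩

lemma dS_le_dist {s x : V} {C : Set V} (hx : x ∈ C) : G.dS s C ≤ G.dist s x :=
  Nat.sInf_le ⟨x, hx, rfl⟩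

lemma SMinimal.dS_le_dist_of_isWalk {s v x : V} {p w : List E} (hmin : G.SMinimal s v p)
    (hw : G.IsWalk x w x) (hne : w ≠ []) : G.dS s (G.cycleSet v p) ≤ G.dist s x := by
  obtain ⟨c, hc⟩ := hw.exists_isSimpleCycle hne
  exact (hmin.2 x c hc).trans (dS_le_dist hc.mem_cycleSet)

end MultiDigraph

open MultiDigraph in
theorem stmt7_general {V E : Type} (G : MultiDigraph V E) (s t : V)
    (v : V) (p : List E)
    (hmin : G.SMinimal s v p)
    (ε : V) (hε : G.EntryNode s (G.cycleSet v p) ε)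
    (hd : G.dist s ε = G.dS s (G.cycleSet v p)) :
    ∃ q, G.IsWalk s q ε ∧ q.length = G.dist s ε ∧
      ∀ v' p', G.IsSimpleCycle v' p' → ε ∈ G.cycleSet v' p' →
        ∀ ξ w, G.IsExitPath t (G.cycleSet v' p') w ξ →
          ∀ x ∈ G.walkVerts s q, x ∈ G.walkVerts ξ w → x = ε := by
  obtain ⟨-, q₀, hq₀, -⟩ := hε
  obtain ⟨q, hq, hqlen⟩ := exists_isWalk_length_eq_dist hq₀.1
  refine ⟨q, hq, hqlen, fun v' p' hC' hεC' ξ w hexit x hxq hxw => ?_⟩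
  by_contra hxε
  obtain ⟨q₁, q₂, rfl, hq₁, hq₂⟩ := hq.exists_split_of_mem hxq
  have hq₂ne : q₂ ≠ [] := by
    rintro rfl
    exact hxε hq₂
  have hx_closer : G.dist s x < G.dist s ε := by
    have := dist_le_length hq₁
    have := List.length_pos_of_ne_nil hq₂ne
    simp only [List.length_append] at hqlen
    omega
  obtain ⟨w₁, -, -, hw₁, -⟩ := hexit.2.1.1.exists_split_of_mem hxw
  obtain ⟨r, hr⟩ := hC'.exists_isWalk hεC' hexit.1
  have hcycle := hmin.dS_le_dist_of_isWalk (hq₂.append_s7 (hr.append_s7 hw₁))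
    (by simp [hq₂ne])
  omega

open MultiDigraph in
/-- For an `s`-minimal cycle `C` and an entry node `ε` of `C` at minimum
distance from `s`, there is a shortest path `q` from `s` to `ε` that is
disjoint (except possibly in `ε`) from every exit path of every cycle
containing `ε`. -/
theorem stmt7 {V E : Type} (G : MultiDigraph V E) (s t : V)
    (hconn : G.STConnected s t) (v : V) (p : List E)
    (hmin : G.SMinimal s v p)
    (ε : V) (hε : G.EntryNode s (G.cycleSet v p) ε)
    (hd : G.dist s ε = G.dS s (G.cycleSet v p)) :
    ∃ q, G.IsWalk s q ε ∧ q.length = G.dist s ε ∧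
      ∀ v' p', G.IsSimpleCycle v' p' → ε ∈ G.cycleSet v' p' →
        ∀ ξ w, G.IsExitPath t (G.cycleSet v' p') w ξ →
          ∀ x ∈ G.walkVerts s q, x ∈ G.walkVerts ξ w → x = ε :=
  stmt7_general G s t v p hmin ε hε hd
end

section
/- Let C be a splittable simple cycle in an st-connected net. If f_{EN} ≤_C ℓ_{NX}, then there exists a neutral hyper-chord for C from the entry region E to the exit region X. -/
namespace MultiDigraph

variable {V E : Type} [DecidableEq V]

/-- The cycle `(v, p)`, as written, is splittable: every entry node occurs
no later than every exit node in the vertex list of the cycle. -/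
def SplittableAt (G : MultiDigraph V E) (s t v : V) (p : List E) : Prop :=
  G.IsSimpleCycle v p ∧
    ∀ u w, G.EntryNode s (G.cycleSet v p) u → G.ExitNode t (G.cycleSet v p) w →
      (G.cycleVerts v p).idxOf u ≤ (G.cycleVerts v p).idxOf w

/-- A cycle is splittable if some cyclic rewriting of it is splittable. -/
def Splittable (G : MultiDigraph V E) (s t v : V) (p : List E) : Prop :=
  G.IsSimpleCycle v p ∧ ∃ (n : ℕ) (v' : V), G.SplittableAt s t v' (p.rotate n)

/-- The entry region of a splittable cycle written starting at the first entry
node: vertices strictly before the first exit node `ξ1`. -/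
def Ereg (G : MultiDigraph V E) (v : V) (p : List E) (ξ1 : V) : Set V :=
  {x | x ∈ G.cycleVerts v p ∧
    (G.cycleVerts v p).idxOf x < (G.cycleVerts v p).idxOf ξ1}

/-- The exit region: from the first exit node `ξ1` (excluded iff `ξ1` is the
last entry node `lastE`) up to the last exit node `lastX`. -/
def Xreg (G : MultiDigraph V E) (v : V) (p : List E) (ξ1 lastE lastX : V) : Set V :=
  {x | x ∈ G.cycleVerts v p ∧
    (if ξ1 = lastE then (G.cycleVerts v p).idxOf ξ1 < (G.cycleVerts v p).idxOf x
      else (G.cycleVerts v p).idxOf ξ1 ≤ (G.cycleVerts v p).idxOf x) ∧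
    (G.cycleVerts v p).idxOf x ≤ (G.cycleVerts v p).idxOf lastX}

/-- The neutral region: vertices strictly after the last exit node `lastX`. -/
def Nreg (G : MultiDigraph V E) (v : V) (p : List E) (lastX : V) : Set V :=
  {x | x ∈ G.cycleVerts v p ∧
    (G.cycleVerts v p).idxOf lastX < (G.cycleVerts v p).idxOf x}

/-- Data of a splittable cycle written starting at its first entry node `v`,
with first exit node `ξ1`, last entry node `lastE` and last exit node `lastX`. -/
structure SplitData (G : MultiDigraph V E) (s t v : V) (p : List E)
    (ξ1 lastE lastX : V) : Prop where
  splitAt : G.SplittableAt s t v p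
  base_entry : G.EntryNode s (G.cycleSet v p) v
  firstExit : G.ExitNode t (G.cycleSet v p) ξ1 ∧
    ∀ w, G.ExitNode t (G.cycleSet v p) w →
      (G.cycleVerts v p).idxOf ξ1 ≤ (G.cycleVerts v p).idxOf w
  lastEntry : G.EntryNode s (G.cycleSet v p) lastE ∧
    ∀ u, G.EntryNode s (G.cycleSet v p) u →
      (G.cycleVerts v p).idxOf u ≤ (G.cycleVerts v p).idxOf lastE
  lastExit : G.ExitNode t (G.cycleSet v p) lastX ∧
    ∀ w, G.ExitNode t (G.cycleSet v p) w →
      (G.cycleVerts v p).idxOf w ≤ (G.cycleVerts v p).idxOf lastX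

/-- A hyper-chord for the cycle `(v,p)` from `x` to `y`: a simple path between
two cycle vertices using at least one edge not on the cycle. -/
def HyperChord (G : MultiDigraph V E) (v : V) (p : List E) (x y : V)
    (h : List E) : Prop :=
  x ∈ G.cycleSet v p ∧ y ∈ G.cycleSet v p ∧ G.IsSimplePath x h y ∧ ∃ e ∈ h, e ∉ p

/-- A neutral hyper-chord: all of its vertices lying on the cycle, other than
its extremes, belong to the neutral region `Nr`. -/
def NeutralHyperChord (G : MultiDigraph V E) (v : V) (p : List E) (x y : V)
    (h : List E) (Nr : Set V) : Prop :=
  G.HyperChord v p x y h ∧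
    ∀ z ∈ G.walkVerts x h, z ∈ G.cycleSet v p → z = x ∨ z = y ∨ z ∈ Nr

/-- `f` is the target in the neutral region of a neutral hyper-chord from the
entry region. -/
def TargetFromE (G : MultiDigraph V E) (v : V) (p : List E) (ξ1 lastX f : V) : Prop :=
  ∃ x ∈ G.Ereg v p ξ1, ∃ h, G.NeutralHyperChord v p x f h (G.Nreg v p lastX)

/-- `ℓ` is the source in the neutral region of a neutral hyper-chord to the
exit region. -/
def SourceToX (G : MultiDigraph V E) (v : V) (p : List E)
    (ξ1 lastE lastX ℓ : V) : Prop :=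
  ∃ y ∈ G.Xreg v p ξ1 lastE lastX, ∃ h,
    G.NeutralHyperChord v p ℓ y h (G.Nreg v p lastX)

/-- The path `(u, q)` touches the splitter of the splittable cycle `(v,p)`:
the splitter is the vertex `ξ1` if `ξ1 = lastE`, and otherwise the edge of the
cycle entering `ξ1`. -/
def TouchesSplitter (G : MultiDigraph V E) (p : List E) (ξ1 lastE u : V)
    (q : List E) : Prop :=
  (ξ1 = lastE ∧ ξ1 ∈ G.walkVerts u q) ∨
  (ξ1 ≠ lastE ∧ ∃ e ∈ q, e ∈ p ∧ G.tgt e = ξ1)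

end MultiDigraph
/-!
Take a neutral hyper-chord from `x ∈ E` to `f` and one from `ℓ` to `y ∈ X`. Since `f ≤_C ℓ`
and both lie in `N`, the arc of `C` from `f` to `ℓ` stays in `N`, so chaining chord, arc and
chord gives a walk from `x` to `y` whose other vertices on `C` all lie in `N`. Shortcutting it
yields a simple path with the same property. Its first edge is not an edge of `C`: such an edge
would lead to the successor of `x`, which lies outside `N` and hence would be `y`; but the
first part of the walk avoids `y` and the rest avoids `x`.
-/

namespace MultiDigraph

variable {V E : Type} {G : MultiDigraph V E}

theorem IsWalk.append_s9 {u m w : V} {q₁ q₂ : List E} (h₁ : G.IsWalk u q₁ m)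
    (h₂ : G.IsWalk m q₂ w) : G.IsWalk u (q₁ ++ q₂) w := by
  induction q₁ generalizing u with
  | nil => exact (h₁ : u = m) ▸ h₂
  | cons e q ih => exact ⟨h₁.1, ih h₁.2⟩

theorem walkVerts_length (u : V) (q : List E) :
    (G.walkVerts u q).length = q.length + 1 := by
  induction q generalizing u with
  | nil => rfl
  | cons e q ih => simp [walkVerts, ih]

theorem start_mem_walkVerts (u : V) (q : List E) : u ∈ G.walkVerts u q := by
  cases q <;> simp [walkVerts]

theorem mem_walkVerts_append {u m z : V} {q₁ q₂ : List E} (h₁ : G.IsWalk u q₁ m)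
    (hz : z ∈ G.walkVerts u (q₁ ++ q₂)) : z ∈ G.walkVerts u q₁ ∨ z ∈ G.walkVerts m q₂ := by
  induction q₁ generalizing u with
  | nil => exact Or.inr ((h₁ : u = m) ▸ hz)
  | cons e q ih =>
    rcases List.mem_cons.1 hz with rfl | hz
    · exact Or.inl List.mem_cons_self
    · exact (ih h₁.2 hz).imp_left (List.mem_cons_of_mem _)

theorem IsWalk.src_mem_walkVerts {u w : V} {q : List E} (h : G.IsWalk u q w) {e : E}
    (he : e ∈ q) : G.src e ∈ G.walkVerts u q := by
  induction q generalizing u with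
  | nil => simp at he
  | cons e' q ih =>
    rcases List.mem_cons.1 he with rfl | he
    · exact h.1 ▸ start_mem_walkVerts (G := G) u _
    · exact List.mem_cons_of_mem _ (ih h.2 he)

theorem IsWalk.tgt_mem_walkVerts {u w : V} {q : List E} (h : G.IsWalk u q w) {e : E}
    (he : e ∈ q) : G.tgt e ∈ G.walkVerts u q := by
  induction q generalizing u with
  | nil => simp at he
  | cons e' q ih =>
    rcases List.mem_cons.1 he with rfl | he
    · exact List.mem_cons_of_mem _ (start_mem_walkVerts _ q)
    · exact List.mem_cons_of_mem _ (ih h.2 he)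

theorem IsWalk.src_getElem {u w : V} {q : List E} (h : G.IsWalk u q w) (i : ℕ)
    (hi : i < q.length) :
    G.src q[i] = (G.walkVerts u q)[i]'(by rw [walkVerts_length]; omega) := by
  induction q generalizing u i with
  | nil => simp at hi
  | cons e q ih =>
    cases i with
    | zero => exact h.1
    | succ i => exact ih h.2 i (by simpa using hi)

theorem IsWalk.tgt_getElem {u w : V} {q : List E} (h : G.IsWalk u q w) (i : ℕ)
    (hi : i < q.length) :
    G.tgt q[i] = (G.walkVerts u q)[i + 1]'(by rw [walkVerts_length]; omega) := by
  induction q generalizing u i with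
  | nil => simp at hi
  | cons e q ih =>
    cases i with
    | zero => cases q <;> rfl
    | succ i => exact ih h.2 i (by simpa using hi)

theorem IsWalk.exists_suffix {u w z : V} {q : List E} (h : G.IsWalk u q w)
    (hz : z ∈ G.walkVerts u q) :
    ∃ q', G.IsWalk z q' w ∧ (∀ e ∈ q', e ∈ q) ∧ G.walkVerts z q' <:+ G.walkVerts u q := by
  induction q generalizing u with
  | nil =>
    obtain rfl : z = u := by simpa [walkVerts] using hz
    exact ⟨[], h, by simp, List.suffix_rfl⟩
  | cons e q ih =>
    rcases List.mem_cons.1 hz with rfl | hz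
    · exact ⟨e :: q, h, fun _ he => he, List.suffix_rfl⟩
    · obtain ⟨q', hq', hsub, hsuf⟩ := ih h.2 hz
      exact ⟨q', hq', fun e' he' => List.mem_cons_of_mem _ (hsub e' he'),
        hsuf.trans (List.suffix_cons u _)⟩

theorem IsWalk.exists_isSimplePath {u w : V} {q : List E} (h : G.IsWalk u q w) :
    ∃ q', G.IsSimplePath u q' w ∧ (∀ e ∈ q', e ∈ q) ∧
      ∀ z ∈ G.walkVerts u q', z ∈ G.walkVerts u q := by
  induction q generalizing u with
  | nil => exact ⟨[], ⟨h, by simp [walkVerts]⟩, by simp, fun _ hz => hz⟩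
  | cons e q ih =>
    obtain ⟨q', ⟨hq', hnd⟩, hsub, hverts⟩ := ih h.2
    by_cases hu : u ∈ G.walkVerts (G.tgt e) q'
    · obtain ⟨r, hr, hrsub, hsuf⟩ := hq'.exists_suffix hu
      exact ⟨r, ⟨hr, hsuf.sublist.nodup hnd⟩,
        fun e' he' => List.mem_cons_of_mem _ (hsub e' (hrsub e' he')),
        fun z hz => List.mem_cons_of_mem _ (hverts z (hsuf.subset hz))⟩
    · refine ⟨e :: q', ⟨⟨h.1, hq'⟩, List.nodup_cons.2 ⟨hu, hnd⟩⟩, ?_, ?_⟩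
      · exact List.forall_mem_cons.2 ⟨List.mem_cons_self, fun e' he' =>
          List.mem_cons_of_mem _ (hsub e' he')⟩
      · exact List.forall_mem_cons.2 ⟨List.mem_cons_self, fun z hz =>
          List.mem_cons_of_mem _ (hverts z hz)⟩

theorem length_cycleVerts (v : V) (p : List E) : (G.cycleVerts v p).length = p.length := by
  simp [cycleVerts, walkVerts_length]

theorem IsWalk.src_getElem_cycleVerts {u w : V} {q : List E} (h : G.IsWalk u q w) (i : ℕ)
    (hi : i < q.length) :
    G.src q[i] = (G.cycleVerts u q)[i]'(by rwa [length_cycleVerts]) := by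
  rw [h.src_getElem i hi]; exact (List.getElem_dropLast _).symm

theorem IsWalk.tgt_getElem_cycleVerts {u w : V} {q : List E} (h : G.IsWalk u q w) (i : ℕ)
    (hi : i + 1 < q.length) :
    G.tgt q[i] = (G.cycleVerts u q)[i + 1]'(by rwa [length_cycleVerts]) := by
  rw [h.tgt_getElem i (by omega)]; exact (List.getElem_dropLast _).symm

section Cycle

variable {v : V} {p : List E}

theorem NeutralHyperChord.eq_source_or_mem {x y : V} {h : List E} {Nr : Set V}
    (hh : G.NeutralHyperChord v p x y h Nr) (hy : y ∈ Nr) :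
    ∀ z ∈ G.walkVerts x h, z ∈ G.cycleSet v p → z = x ∨ z ∈ Nr := by
  intro z hz hzC
  rcases hh.2 z hz hzC with rfl | rfl | hzN
  exacts [Or.inl rfl, Or.inr hy, Or.inr hzN]

theorem NeutralHyperChord.eq_target_or_mem {x y : V} {h : List E} {Nr : Set V}
    (hh : G.NeutralHyperChord v p x y h Nr) (hx : x ∈ Nr) :
    ∀ z ∈ G.walkVerts x h, z ∈ G.cycleSet v p → z = y ∨ z ∈ Nr := by
  intro z hz hzC
  rcases hh.2 z hz hzC with rfl | rfl | hzN
  exacts [Or.inr hx, Or.inl rfl, Or.inr hzN]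

variable [DecidableEq V]

theorem IsSimpleCycle.idxOf_getElem (hC : G.IsSimpleCycle v p) (i : ℕ) (hi : i < p.length) :
    (G.cycleVerts v p).idxOf ((G.cycleVerts v p)[i]'(by rwa [length_cycleVerts])) = i :=
  List.Nodup.idxOf_getElem hC.2.2 i _

/-- The bound `hlt` excludes the last edge of the cycle, which wraps around to the base point. -/
theorem IsSimpleCycle.idxOf_tgt_of_mem (hC : G.IsSimpleCycle v p) {e : E} (he : e ∈ p)
    (hlt : (G.cycleVerts v p).idxOf (G.src e) + 1 < p.length) :
    G.tgt e ∈ G.cycleVerts v p ∧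
      (G.cycleVerts v p).idxOf (G.tgt e) = (G.cycleVerts v p).idxOf (G.src e) + 1 := by
  obtain ⟨i, hi, rfl⟩ := List.getElem_of_mem he
  rw [hC.1.src_getElem_cycleVerts i hi, hC.idxOf_getElem i hi] at hlt ⊢
  rw [hC.1.tgt_getElem_cycleVerts i hlt]
  exact ⟨List.getElem_mem _, hC.idxOf_getElem (i + 1) hlt⟩

theorem IsSimpleCycle.exists_walk_of_idxOf_le (hC : G.IsSimpleCycle v p) {a b : V}
    (ha : a ∈ G.cycleVerts v p) (hb : b ∈ G.cycleVerts v p)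
    (hab : (G.cycleVerts v p).idxOf a ≤ (G.cycleVerts v p).idxOf b) :
    ∃ q, G.IsWalk a q b ∧ ∀ z ∈ G.walkVerts a q, z ∈ G.cycleVerts v p ∧
      (G.cycleVerts v p).idxOf a ≤ (G.cycleVerts v p).idxOf z ∧
      (G.cycleVerts v p).idxOf z ≤ (G.cycleVerts v p).idxOf b := by
  set cv := G.cycleVerts v p
  have hlen : cv.length = p.length := length_cycleVerts v p
  suffices key : ∀ k, cv.idxOf a ≤ k → ∀ hk : k < p.length,
      ∃ q, G.IsWalk a q (cv[k]'(hlen ▸ hk)) ∧ ∀ z ∈ G.walkVerts a q,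
        z ∈ cv ∧ cv.idxOf a ≤ cv.idxOf z ∧ cv.idxOf z ≤ k by
    have hbk : cv.idxOf b < p.length := hlen ▸ List.idxOf_lt_length_of_mem hb
    simpa only [List.getElem_idxOf] using key _ hab hbk
  intro k hak
  induction k, hak using Nat.le_induction with
  | base =>
    intro _
    refine ⟨[], (List.getElem_idxOf _).symm, fun z hz => ?_⟩
    obtain rfl : z = a := by simpa [walkVerts] using hz
    exact ⟨ha, le_rfl, le_rfl⟩
  | succ k hak ih =>
    intro hk
    obtain ⟨q, hq, hverts⟩ := ih (by omega)
    have hsrc := hC.1.src_getElem_cycleVerts k (by omega)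
    have htgt := hC.1.tgt_getElem_cycleVerts k hk
    refine ⟨q ++ [p[k]], hq.append_s9 ⟨hsrc, htgt⟩, fun z hz => ?_⟩
    rcases mem_walkVerts_append hq hz with hz | hz
    · obtain ⟨hzC, h₁, h₂⟩ := hverts z hz
      exact ⟨hzC, h₁, by omega⟩
    · simp only [walkVerts, List.mem_cons, List.not_mem_nil, or_false] at hz
      rcases hz with rfl | rfl
      · exact ⟨List.getElem_mem _, by rw [hC.idxOf_getElem k (by omega)]; omega,
          by rw [hC.idxOf_getElem k (by omega)]; omega⟩
      · rw [htgt]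
        exact ⟨List.getElem_mem _, by rw [hC.idxOf_getElem _ hk]; omega,
          by rw [hC.idxOf_getElem _ hk]⟩

theorem IsSimpleCycle.exists_neutralHyperChord_of_append (hC : G.IsSimpleCycle v p)
    {x y m lastX : V} {q₁ q₂ : List E}
    (hx : x ∈ G.cycleVerts v p) (hy : y ∈ G.cycleVerts v p)
    (hxy : (G.cycleVerts v p).idxOf x < (G.cycleVerts v p).idxOf y)
    (hyX : (G.cycleVerts v p).idxOf y ≤ (G.cycleVerts v p).idxOf lastX)
    (hq₁ : G.IsWalk x q₁ m) (hq₂ : G.IsWalk m q₂ y)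
    (hN₁ : ∀ z ∈ G.walkVerts x q₁, z ∈ G.cycleSet v p → z = x ∨ z ∈ G.Nreg v p lastX)
    (hN₂ : ∀ z ∈ G.walkVerts m q₂, z ∈ G.cycleSet v p → z = y ∨ z ∈ G.Nreg v p lastX) :
    ∃ h, G.NeutralHyperChord v p x y h (G.Nreg v p lastX) := by
  have hxN : x ∉ G.Nreg v p lastX := fun hN => by have := hN.2; omega
  have hyN : y ∉ G.Nreg v p lastX := fun hN => by have := hN.2; omega
  have hne : x ≠ y := by rintro rfl; omega
  obtain ⟨h, hh, hsub, hverts⟩ := (hq₁.append_s9 hq₂).exists_isSimplePath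
  have hneutral : ∀ z ∈ G.walkVerts x h, z ∈ G.cycleSet v p →
      z = x ∨ z = y ∨ z ∈ G.Nreg v p lastX := by
    intro z hz hzC
    rcases mem_walkVerts_append hq₁ (hverts z hz) with hz | hz
    · exact (hN₁ z hz hzC).imp_right Or.inr
    · exact Or.inr (hN₂ z hz hzC)
  refine ⟨h, ⟨hx, hy, hh, ?_⟩, hneutral⟩
  obtain _ | ⟨e, h'⟩ := h
  · exact absurd hh.1 hne
  refine ⟨e, List.mem_cons_self, fun he => ?_⟩
  have hsrc : G.src e = x := hh.1.1
  have hlen : (G.cycleVerts v p).idxOf y < p.length :=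
    length_cycleVerts (G := G) v p ▸ List.idxOf_lt_length_of_mem hy
  obtain ⟨htgtC, hidx⟩ := hC.idxOf_tgt_of_mem he (by rw [hsrc]; omega)
  rcases hneutral _ (hh.1.tgt_mem_walkVerts List.mem_cons_self) htgtC with htgt | htgt | hN
  · rw [htgt, hsrc] at hidx; omega
  · rcases List.mem_append.1 (hsub e List.mem_cons_self) with he₁ | he₂
    · rcases hN₁ y (htgt ▸ hq₁.tgt_mem_walkVerts he₁) hy with h | h
      exacts [hne h.symm, hyN h]
    · rcases hN₂ x (hsrc ▸ hq₂.src_mem_walkVerts he₂) hx with h | h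
      exacts [hne h, hxN h]
  · have := hN.2; rw [hidx, hsrc] at this; omega

end Cycle

end MultiDigraph

open MultiDigraph in
theorem stmt9_general {V E : Type} [DecidableEq V] (G : MultiDigraph V E)
    (s t v : V) (p : List E) (ξ1 lastE lastX : V)
    (hsd : G.SplitData s t v p ξ1 lastE lastX)
    (f ℓ : V)
    (hf : f ∈ G.Nreg v p lastX ∧ G.TargetFromE v p ξ1 lastX f ∧
      ∀ f' ∈ G.Nreg v p lastX, G.TargetFromE v p ξ1 lastX f' →
        (G.cycleVerts v p).idxOf f ≤ (G.cycleVerts v p).idxOf f')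
    (hℓ : ℓ ∈ G.Nreg v p lastX ∧ G.SourceToX v p ξ1 lastE lastX ℓ ∧
      ∀ ℓ' ∈ G.Nreg v p lastX, G.SourceToX v p ξ1 lastE lastX ℓ' →
        (G.cycleVerts v p).idxOf ℓ' ≤ (G.cycleVerts v p).idxOf ℓ)
    (hfl : (G.cycleVerts v p).idxOf f ≤ (G.cycleVerts v p).idxOf ℓ) :
    ∃ x ∈ G.Ereg v p ξ1, ∃ y ∈ G.Xreg v p ξ1 lastE lastX, ∃ h,
      G.NeutralHyperChord v p x y h (G.Nreg v p lastX) := by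
  obtain ⟨hfN, ⟨x, hxE, h₁, hh₁⟩, -⟩ := hf
  obtain ⟨hℓN, ⟨y, hyX, h₂, hh₂⟩, -⟩ := hℓ
  have hC := hsd.splitAt.1
  have hxy : (G.cycleVerts v p).idxOf x < (G.cycleVerts v p).idxOf y := by
    have := hxE.2
    have := hyX.2.1
    split_ifs at this <;> omega
  obtain ⟨seg, hseg, hsegN⟩ := hC.exists_walk_of_idxOf_le hfN.1 hℓN.1 hfl
  refine ⟨x, hxE, y, hyX, hC.exists_neutralHyperChord_of_append hxE.1 hyX.1 hxy hyX.2.2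
    hh₁.1.2.2.1.1 (hseg.append_s9 hh₂.1.2.2.1.1) (hh₁.eq_source_or_mem hfN) fun z hz hzC => ?_⟩
  rcases mem_walkVerts_append hseg hz with hz | hz
  · obtain ⟨hzC, hfz, -⟩ := hsegN z hz
    exact Or.inr ⟨hzC, lt_of_lt_of_le hfN.2 hfz⟩
  · exact hh₂.eq_target_or_mem hℓN z hz hzC

open MultiDigraph in
/-- If `f_{EN} ≤_C ℓ_{NX}` (both existing in the neutral region, `f` being the
first target of a neutral hyper-chord from `E`, `ℓ` the last source of a
neutral hyper-chord to `X`), then there is a neutral hyper-chord from the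
entry region `E` to the exit region `X`. -/
theorem stmt9 {V E : Type} [DecidableEq V] (G : MultiDigraph V E)
    (s t v : V) (p : List E) (ξ1 lastE lastX : V)
    (hconn : G.STConnected s t)
    (hsd : G.SplitData s t v p ξ1 lastE lastX)
    (f ℓ : V)
    (hf : f ∈ G.Nreg v p lastX ∧ G.TargetFromE v p ξ1 lastX f ∧
      ∀ f' ∈ G.Nreg v p lastX, G.TargetFromE v p ξ1 lastX f' →
        (G.cycleVerts v p).idxOf f ≤ (G.cycleVerts v p).idxOf f')
    (hℓ : ℓ ∈ G.Nreg v p lastX ∧ G.SourceToX v p ξ1 lastE lastX ℓ ∧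
      ∀ ℓ' ∈ G.Nreg v p lastX, G.SourceToX v p ξ1 lastE lastX ℓ' →
        (G.cycleVerts v p).idxOf ℓ' ≤ (G.cycleVerts v p).idxOf ℓ)
    (hfl : (G.cycleVerts v p).idxOf f ≤ (G.cycleVerts v p).idxOf ℓ) :
    ∃ x ∈ G.Ereg v p ξ1, ∃ y ∈ G.Xreg v p ξ1 lastE lastX, ∃ h,
      G.NeutralHyperChord v p x y h (G.Nreg v p lastX) :=
  stmt9_general G s t v p ξ1 lastE lastX hsd f ℓ hf hℓ hfl
end

section
/- Let C be a splittable simple cycle in an st-connected net without any neutral hyper-chord from its entry region E to its exit region X. Then all edges of C lying strictly between ℓ_{NX} and f_{EN} (in the cyclic order) are redundant. -/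
/-!
Write `i` for positions on the cycle, counted from the first entry node `v`, and let `e` be a
cycle edge between `ℓ_{NX}` and `f_{EN}`. Every simple path from `s` to `src e` and every simple
path from `tgt e` to `t` passes through the first exit node `ξ1`, so a simple `st`-path through
`e` would visit `ξ1` twice.

A path from `s` first meets the cycle at an entry node, at or before `ξ1`. Cut a path from `s` to
a cycle vertex `d` with `i ξ1 ≤ i d` at its last cycle vertex `y` before `d` with
`i y ≤ i lastX`. If `i ξ1 ≤ i y`, recurse on the shorter path up to `y`. Otherwise `y ∈ E`,
and the rest, whose inner cycle vertices lie in `N`, is a single cycle edge, which leads to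
`ξ1`, or a neutral hyper-chord, which cannot end in `X` and ends in `N` only at or after
`f_{EN}`, whereas `src e` lies before `f_{EN}`.

A path to `t` last leaves the cycle at an exit node, in `[ξ1, lastX]`. Starting from `tgt e`,
which lies in `E` or in `N` after `ℓ_{NX}`, follow the path from a vertex of `E` to its next cycle
vertex, and from a vertex of `N` to its next cycle vertex outside `N`. Each piece is a run of
cycle edges or a neutral hyper-chord, so it reaches `ξ1`, lands in `E`, or lands in `N` at the
target of a neutral hyper-chord from `E`; as `ℓ_{NX}` precedes `f_{EN}`, such a vertex is not the
source of a neutral hyper-chord into `X`.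
-/

theorem List.exists_eq_append_cons_of_first {α : Type*} {P : α → Prop} {l : List α}
    (h : ∃ a ∈ l, P a) :
    ∃ l₁ a l₂, l = l₁ ++ a :: l₂ ∧ P a ∧ ∀ b ∈ l₁, ¬ P b := by
  induction l with
  | nil => simp at h
  | cons a l ih =>
    by_cases ha : P a
    · exact ⟨[], a, l, rfl, ha, by simp⟩
    · obtain ⟨l₁, b, l₂, rfl, hb, hl₁⟩ := ih (by simpa [ha] using h)
      exact ⟨a :: l₁, b, l₂, rfl, hb, by simpa [ha] using hl₁⟩

theorem List.exists_eq_append_cons_of_last {α : Type*} {P : α → Prop} {l : List α}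
    (h : ∃ a ∈ l, P a) :
    ∃ l₁ a l₂, l = l₁ ++ a :: l₂ ∧ P a ∧ ∀ b ∈ l₂, ¬ P b := by
  induction l with
  | nil => simp at h
  | cons a l ih =>
    by_cases hl : ∃ b ∈ l, P b
    · obtain ⟨l₁, b, l₂, rfl, hb, hl₂⟩ := ih hl
      exact ⟨a :: l₁, b, l₂, rfl, hb, hl₂⟩
    · push Not at hl
      obtain ⟨b, hb, hPb⟩ := h
      rcases List.mem_cons.1 hb with rfl | hb
      exacts [⟨[], b, l, rfl, hPb, hl⟩, absurd hPb (hl b hb)]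

namespace MultiDigraph

section Walks

variable {V E : Type} {G : MultiDigraph V E} {s t u w : V} {e : E} {q q₁ q₂ : List E}

theorem walkVerts_eq_cons : G.walkVerts u q = u :: q.map G.tgt := by
  induction q generalizing u <;> simp_all [walkVerts]

theorem walkVerts_append :
    G.walkVerts u (q₁ ++ q₂) = G.walkVerts u q₁ ++ q₂.map G.tgt := by
  simp [walkVerts_eq_cons]

theorem walkVerts_append_cons_s10 :
    G.walkVerts u (q₁ ++ e :: q₂) = G.walkVerts u q₁ ++ G.walkVerts (G.tgt e) q₂ := by
  simp [walkVerts_eq_cons]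

theorem isWalk_append_s10 :
    G.IsWalk u (q₁ ++ q₂) w ↔ ∃ m, G.IsWalk u q₁ m ∧ G.IsWalk m q₂ w := by
  induction q₁ generalizing u with
  | nil => simp [IsWalk]
  | cons e q ih => simp only [List.cons_append, IsWalk, ih, and_assoc, exists_and_left]

theorem IsWalk.walkVerts_eq (h : G.IsWalk u q w) : G.walkVerts u q = q.map G.src ++ [w] := by
  induction q generalizing u with
  | nil => exact congrArg (fun x => [x]) h
  | cons e q ih => simp [walkVerts, ih h.2, h.1]

theorem IsWalk.end_mem (h : G.IsWalk u q w) : w ∈ G.walkVerts u q := by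
  simp [h.walkVerts_eq]

theorem IsSimplePath.append (h : G.IsSimplePath u (q₁ ++ q₂) w) :
    ∃ m, G.IsSimplePath u q₁ m ∧ G.IsSimplePath m q₂ w := by
  obtain ⟨m, h₁, h₂⟩ := isWalk_append_s10.1 h.1
  have hnd := h.2
  rw [walkVerts_append, List.nodup_append] at hnd
  refine ⟨m, ⟨h₁, hnd.1⟩, h₂, ?_⟩
  rw [walkVerts_eq_cons, List.nodup_cons]
  exact ⟨fun hm => hnd.2.2 m h₁.end_mem m hm rfl, hnd.2.1⟩

theorem IsSimplePath.append_cons (h : G.IsSimplePath u (q₁ ++ e :: q₂) w) :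
    G.IsSimplePath u q₁ (G.src e) ∧ G.IsSimplePath (G.tgt e) q₂ w ∧
      (G.walkVerts u q₁).Disjoint (G.walkVerts (G.tgt e) q₂) := by
  obtain ⟨m, h₁, h₂⟩ := h.append
  obtain rfl : G.src e = m := h₂.1.1
  have hnd := h.2
  rw [walkVerts_append_cons_s10, List.nodup_append] at hnd
  refine ⟨h₁, ⟨h₂.1.2, hnd.2.1⟩, fun x hx₁ hx₂ => hnd.2.2 x hx₁ x hx₂ rfl⟩

theorem IsSimplePath.exists_last_src (h : G.IsSimplePath u q w) (P : V → Prop)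
    (hP : ∃ e ∈ q, P (G.src e)) :
    ∃ q₁ e q₂, q = q₁ ++ e :: q₂ ∧ P (G.src e) ∧ G.IsSimplePath u q₁ (G.src e) ∧
      G.IsSimplePath (G.src e) (e :: q₂) w ∧
      ∀ z ∈ G.walkVerts (G.src e) (e :: q₂), z = G.src e ∨ z = w ∨ ¬ P z := by
  obtain ⟨q₁, e, q₂, rfl, he, hq₂⟩ :=
    List.exists_eq_append_cons_of_last (P := fun e => P (G.src e)) hP
  obtain ⟨m, h₁, h₂⟩ := h.append
  obtain rfl : G.src e = m := h₂.1.1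
  refine ⟨q₁, e, q₂, rfl, he, h₁, h₂, fun z hz => ?_⟩
  rw [h₂.1.walkVerts_eq] at hz
  simp only [List.map_cons, List.cons_append, List.mem_cons, List.mem_append, List.mem_map,
    List.not_mem_nil, or_false] at hz
  rcases hz with hz | ⟨e', he', rfl⟩ | hz
  exacts [Or.inl hz, Or.inr (Or.inr (hq₂ e' he')), Or.inr (Or.inl hz)]

theorem IsSimplePath.exists_first_tgt (h : G.IsSimplePath u q w) (P : V → Prop)
    (hP : ∃ e ∈ q, P (G.tgt e)) :
    ∃ q₁ e q₂, q = q₁ ++ e :: q₂ ∧ P (G.tgt e) ∧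
      G.IsSimplePath u (q₁ ++ [e]) (G.tgt e) ∧ G.IsSimplePath (G.tgt e) q₂ w ∧
      ∀ z ∈ G.walkVerts u (q₁ ++ [e]), z = u ∨ z = G.tgt e ∨ ¬ P z := by
  obtain ⟨q₁, e, q₂, rfl, he, hq₁⟩ :=
    List.exists_eq_append_cons_of_first (P := fun e => P (G.tgt e)) hP
  obtain ⟨m, h₁, h₂⟩ := (List.append_cons q₁ e q₂ ▸ h).append
  obtain ⟨m', -, -, rfl⟩ := isWalk_append_s10.1 h₁.1
  refine ⟨q₁, e, q₂, rfl, he, h₁, h₂, fun z hz => ?_⟩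
  simp only [walkVerts_eq_cons, List.map_append, List.map_cons, List.map_nil, List.mem_cons,
    List.mem_append, List.mem_map, List.not_mem_nil, or_false] at hz
  rcases hz with hz | ⟨e', he', rfl⟩ | hz
  exacts [Or.inl hz, Or.inr (Or.inr (hq₁ e' he')), Or.inr (Or.inl hz)]

theorem entryNode_of_forall_src_notMem {C : Set V} (h : G.IsSimplePath s q u) (hu : u ∈ C)
    (hq : ∀ e ∈ q, G.src e ∉ C) : G.EntryNode s C u := by
  refine ⟨hu, q, h, fun x hx hxC => ?_⟩
  rw [h.1.walkVerts_eq] at hx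
  simp only [List.mem_append, List.mem_map, List.mem_singleton] at hx
  rcases hx with ⟨e, he, rfl⟩ | rfl
  exacts [absurd hxC (hq e he), rfl]

theorem exitNode_of_forall_tgt_notMem {C : Set V} (h : G.IsSimplePath u q t) (hu : u ∈ C)
    (hq : ∀ e ∈ q, G.tgt e ∉ C) : G.ExitNode t C u := by
  refine ⟨hu, q, h, fun x hx hxC => ?_⟩
  rw [walkVerts_eq_cons] at hx
  simp only [List.mem_cons, List.mem_map] at hx
  rcases hx with rfl | ⟨e, he, rfl⟩
  exacts [rfl, absurd hxC (hq e he)]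

theorem IsSimplePath.exists_entryNode_src {C : Set V} (h : G.IsSimplePath s q u) (hu : u ∈ C)
    (hnu : ¬ G.EntryNode s C u) : ∃ e ∈ q, G.EntryNode s C (G.src e) := by
  by_cases hq : ∃ e ∈ q, G.src e ∈ C
  · obtain ⟨q₁, e, q₂, rfl, he, hq₁⟩ :=
      List.exists_eq_append_cons_of_first (P := fun e => G.src e ∈ C) hq
    exact ⟨e, by simp, entryNode_of_forall_src_notMem h.append_cons.1 he hq₁⟩
  · push Not at hq
    exact absurd (entryNode_of_forall_src_notMem h hu hq) hnu

theorem IsSimplePath.exists_exitNode_tgt {C : Set V} (h : G.IsSimplePath u q t) (hu : u ∈ C)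
    (hnu : ¬ G.ExitNode t C u) : ∃ e ∈ q, G.ExitNode t C (G.tgt e) := by
  by_cases hq : ∃ e ∈ q, G.tgt e ∈ C
  · obtain ⟨q₁, e, q₂, rfl, he, hq₂⟩ :=
      List.exists_eq_append_cons_of_last (P := fun e => G.tgt e ∈ C) hq
    exact ⟨e, by simp, exitNode_of_forall_tgt_notMem h.append_cons.2.1 he hq₂⟩
  · push Not at hq
    exact absurd (exitNode_of_forall_tgt_notMem h hu hq) hnu

end Walks

section Cycle

variable {V E : Type} {G : MultiDigraph V E} {v : V} {e : E} {p : List E}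

theorem IsSimpleCycle.cycleVerts_eq (hc : G.IsSimpleCycle v p) :
    G.cycleVerts v p = p.map G.src := by
  simp [cycleVerts, hc.1.walkVerts_eq]

theorem IsSimpleCycle.src_mem (hc : G.IsSimpleCycle v p) (he : e ∈ p) :
    G.src e ∈ G.cycleVerts v p := by
  rw [hc.cycleVerts_eq]
  exact List.mem_map_of_mem he

theorem IsSimpleCycle.base_mem (hc : G.IsSimpleCycle v p) : v ∈ G.cycleVerts v p := by
  obtain ⟨e, p', rfl⟩ := List.exists_cons_of_ne_nil hc.2.1
  simp [hc.cycleVerts_eq, hc.1.1]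

theorem IsSimpleCycle.tgt_mem (hc : G.IsSimpleCycle v p) (he : e ∈ p) :
    G.tgt e ∈ G.cycleVerts v p := by
  have h : G.tgt e ∈ G.walkVerts v p := by simp [walkVerts_eq_cons, List.mem_map_of_mem he]
  rw [hc.1.walkVerts_eq, List.mem_append, List.mem_singleton, ← hc.cycleVerts_eq] at h
  rcases h with h | rfl
  exacts [h, hc.base_mem]

variable [DecidableEq V]

theorem IsSimpleCycle.idxOf_base (hc : G.IsSimpleCycle v p) : (G.cycleVerts v p).idxOf v = 0 := by
  obtain ⟨e, p', rfl⟩ := List.exists_cons_of_ne_nil hc.2.1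
  simp [hc.cycleVerts_eq, hc.1.1]

theorem IsSimpleCycle.tgt_eq_or_idxOf_tgt (hc : G.IsSimpleCycle v p) (he : e ∈ p) :
    G.tgt e = v ∨
      (G.cycleVerts v p).idxOf (G.tgt e) = (G.cycleVerts v p).idxOf (G.src e) + 1 := by
  have hnd : (G.cycleVerts v p).Nodup := hc.2.2
  rw [hc.cycleVerts_eq] at hnd ⊢
  obtain ⟨p₁, p₂, rfl⟩ := List.append_of_mem he
  obtain ⟨m, -, h₂⟩ := isWalk_append_s10.1 hc.1
  cases p₂ with
  | nil => exact Or.inl h₂.2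
  | cons e' p₂ =>
    right
    have hL : (p₁ ++ e :: e' :: p₂).map G.src =
        p₁.map G.src ++ G.src e :: G.tgt e :: p₂.map G.src := by simp [h₂.2.1]
    rw [hL] at hnd ⊢
    simp only [List.nodup_append, List.nodup_cons, List.mem_cons, not_or] at hnd
    have hs : G.src e ∉ p₁.map G.src := fun h => hnd.2.2 _ h _ (Or.inl rfl) rfl
    have ht : G.tgt e ∉ p₁.map G.src := fun h => hnd.2.2 _ h _ (by simp) rfl
    simp [List.idxOf_append, hs, ht, hnd.2.1.1.1]
    omega

theorem IsSimpleCycle.ne_base_of_mem_Nreg (hc : G.IsSimpleCycle v p) {x lastX : V}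
    (hx : x ∈ G.Nreg v p lastX) : x ≠ v := by
  rintro rfl
  have := hx.2
  rw [hc.idxOf_base] at this
  omega

end Cycle

section Regions

variable {V E : Type} [DecidableEq V] {G : MultiDigraph V E} {s t v x y f ℓ : V}
  {h p : List E} {ξ1 lastE lastX : V}

local notation "idx " x:max => List.idxOf x (cycleVerts G v p)

theorem mem_Xreg_of_ne (hx : x ∈ G.cycleVerts v p) (hξx : idx ξ1 ≤ idx x)
    (hxX : idx x ≤ idx lastX) (hne : x ≠ ξ1) : x ∈ G.Xreg v p ξ1 lastE lastX := by
  refine ⟨hx, ?_, hxX⟩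
  split_ifs
  · exact lt_of_le_of_ne hξx fun h => hne ((List.idxOf_inj hx).1 h.symm)
  · exact hξx

theorem neutral_of_forall_not_le {W : List V}
    (hW : ∀ z ∈ W, z = x ∨ z = y ∨ ¬ (z ∈ G.cycleVerts v p ∧ idx z ≤ idx lastX)) :
    ∀ z ∈ W, z ∈ G.cycleSet v p → z = x ∨ z = y ∨ z ∈ G.Nreg v p lastX :=
  fun z hz hzC =>
  (hW z hz).imp_right (Or.imp_right fun h => ⟨hzC, lt_of_not_ge fun h' => h ⟨hzC, h'⟩⟩)

theorem SplitData.idxOf_le_of_entryNode (hsd : G.SplitData s t v p ξ1 lastE lastX)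
    (hx : G.EntryNode s (G.cycleSet v p) x) : idx x ≤ idx ξ1 :=
  hsd.splitAt.2 x ξ1 hx hsd.firstExit.1

theorem SplitData.idxOf_mem_of_exitNode (hsd : G.SplitData s t v p ξ1 lastE lastX)
    (hx : G.ExitNode t (G.cycleSet v p) x) : idx ξ1 ≤ idx x ∧ idx x ≤ idx lastX :=
  ⟨hsd.firstExit.2 x hx, hsd.lastExit.2 x hx⟩

theorem SplitData.firstExit_le_lastExit (hsd : G.SplitData s t v p ξ1 lastE lastX) :
    idx ξ1 ≤ idx lastX :=
  hsd.lastExit.2 ξ1 hsd.firstExit.1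

theorem SplitData.eq_firstExit_or_targetFromE (hsd : G.SplitData s t v p ξ1 lastE lastX)
    (hno : ¬ ∃ x ∈ G.Ereg v p ξ1, ∃ y ∈ G.Xreg v p ξ1 lastE lastX, ∃ h,
      G.NeutralHyperChord v p x y h (G.Nreg v p lastX))
    (hh : G.IsSimplePath x h y) (hx : x ∈ G.Ereg v p ξ1) (hy : y ∈ G.cycleVerts v p)
    (hξy : idx ξ1 ≤ idx y)
    (hint : ∀ z ∈ G.walkVerts x h,
      z = x ∨ z = y ∨ ¬ (z ∈ G.cycleVerts v p ∧ idx z ≤ idx lastX)) :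
    y = ξ1 ∨ (y ∈ G.Nreg v p lastX ∧ G.TargetFromE v p ξ1 lastX y) := by
  have hneutral := neutral_of_forall_not_le hint
  have hξX := hsd.firstExit_le_lastExit
  by_cases hchord : ∃ e ∈ h, e ∉ p
  · have hnc : G.NeutralHyperChord v p x y h (G.Nreg v p lastX) :=
      ⟨⟨hx.1, hy, hh, hchord⟩, hneutral⟩
    by_cases hyξ : y = ξ1
    · exact Or.inl hyξ
    by_cases hyX : idx y ≤ idx lastX
    · exact absurd ⟨x, hx, y, mem_Xreg_of_ne hy hξy hyX hyξ, h, hnc⟩ hno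
    · exact Or.inr ⟨⟨hy, by omega⟩, x, hx, h, hnc⟩
  push Not at hchord
  have hc := hsd.splitAt.1
  cases h with
  | nil =>
    obtain rfl : x = y := hh.1
    exact absurd hx.2 (by omega)
  | cons e h' =>
    have he : e ∈ p := hchord e List.mem_cons_self
    have hnd := hh.2
    rw [walkVerts_eq_cons, List.map_cons, List.nodup_cons, List.mem_cons, not_or] at hnd
    have hte : idx (G.tgt e) ≤ idx ξ1 := by
      rcases hc.tgt_eq_or_idxOf_tgt he with h0 | h1
      · rw [h0, hc.idxOf_base]; omega
      · rw [h1, hh.1.1]; exact hx.2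
    rcases hneutral (G.tgt e) (by simp [walkVerts_eq_cons]) (hc.tgt_mem he) with h | rfl | h
    · exact absurd h.symm hnd.1.1
    · exact Or.inl ((List.idxOf_inj hy).1 (by omega))
    · exact absurd h.2 (by omega)

theorem SplitData.eq_firstExit_or_lt_or_sourceToX (hsd : G.SplitData s t v p ξ1 lastE lastX)
    {w : V} (hh : G.IsSimplePath w h y) (hw : w ∈ G.Nreg v p lastX) (hy : y ∈ G.cycleVerts v p)
    (hyX : idx y ≤ idx lastX)
    (hint : ∀ z ∈ G.walkVerts w h,
      z = w ∨ z = y ∨ ¬ (z ∈ G.cycleVerts v p ∧ idx z ≤ idx lastX)) :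
    y = ξ1 ∨ idx y < idx ξ1 ∨ G.SourceToX v p ξ1 lastE lastX w := by
  have hneutral := neutral_of_forall_not_le hint
  by_cases hchord : ∃ e ∈ h, e ∉ p
  · by_cases hyξ : y = ξ1
    · exact Or.inl hyξ
    by_cases hyE : idx y < idx ξ1
    · exact Or.inr (Or.inl hyE)
    exact Or.inr (Or.inr ⟨y, mem_Xreg_of_ne hy (by omega) hyX hyξ, h,
      ⟨hw.1, hy, hh, hchord⟩, hneutral⟩)
  push Not at hchord
  have hc := hsd.splitAt.1
  rcases List.eq_nil_or_concat' h with rfl | ⟨h', e, rfl⟩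
  · obtain rfl : w = y := hh.1
    exact absurd hw.2 (by omega)
  obtain ⟨m, hm, rfl, rfl⟩ : ∃ m, G.IsWalk w h' m ∧ G.src e = m ∧ G.tgt e = y := by
    simpa [isWalk_append_s10, IsWalk] using hh.1
  have he : e ∈ p := hchord e (by simp)
  have hnd := hh.2
  rw [walkVerts_append, List.nodup_append] at hnd
  have hse : idx lastX < idx (G.src e) := by
    rcases hneutral (G.src e) (by simp [walkVerts_append, hm.end_mem])
      (hc.src_mem he) with rfl | h | h
    · exact hw.2
    · exact absurd h (hnd.2.2 _ hm.end_mem _ (by simp))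
    · exact h.2
  rcases hc.tgt_eq_or_idxOf_tgt he with h0 | h1
  · by_cases hξ0 : idx ξ1 = 0
    · exact Or.inl ((List.idxOf_inj hy).1 (by rw [h0, hc.idxOf_base, hξ0]))
    · exact Or.inr (Or.inl (by rw [h0, hc.idxOf_base]; omega))
  · exact absurd hyX (by omega)

theorem SplitData.firstExit_mem_of_path_from_s (hsd : G.SplitData s t v p ξ1 lastE lastX)
    (hno : ¬ ∃ x ∈ G.Ereg v p ξ1, ∃ y ∈ G.Xreg v p ξ1 lastE lastX, ∃ h,
      G.NeutralHyperChord v p x y h (G.Nreg v p lastX))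
    {τ : List E} {d : V} (hτ : G.IsSimplePath s τ d) (hd : d ∈ G.cycleVerts v p)
    (hξd : idx ξ1 ≤ idx d) (hdT : d ∈ G.Nreg v p lastX → ¬ G.TargetFromE v p ξ1 lastX d) :
    ξ1 ∈ G.walkVerts s τ := by
  by_cases hdξ : d = ξ1
  · exact hdξ ▸ hτ.1.end_mem
  have hξX := hsd.firstExit_le_lastExit
  obtain ⟨e₀, he₀, hentry⟩ := hτ.exists_entryNode_src hd fun hentry =>
    hdξ ((List.idxOf_inj hd).1 (le_antisymm (hsd.idxOf_le_of_entryNode hentry) hξd))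
  have := hsd.idxOf_le_of_entryNode hentry
  obtain ⟨τ₁, e, τ₂, rfl, ⟨hy, hyX⟩, hτ₁, hseg, hint⟩ :=
    hτ.exists_last_src (fun z => z ∈ G.cycleVerts v p ∧ idx z ≤ idx lastX)
      ⟨e₀, he₀, hentry.1, by omega⟩
  rw [walkVerts_append_cons_s10]
  refine List.mem_append_left _ ?_
  by_cases hξy : idx ξ1 ≤ idx (G.src e)
  · exact hsd.firstExit_mem_of_path_from_s hno hτ₁ hy hξy fun hN => absurd hN.2 (by omega)
  rcases hsd.eq_firstExit_or_targetFromE hno hseg ⟨hy, by omega⟩ hd hξd hint with h | h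
  exacts [absurd h hdξ, absurd h.2 (hdT h.1)]
termination_by τ.length
decreasing_by subst_vars; simp

theorem SplitData.firstExit_mem_of_path_to_t (hsd : G.SplitData s t v p ξ1 lastE lastX)
    (hno : ¬ ∃ x ∈ G.Ereg v p ξ1, ∃ y ∈ G.Xreg v p ξ1 lastE lastX, ∃ h,
      G.NeutralHyperChord v p x y h (G.Nreg v p lastX))
    (hTS : ∀ x ∈ G.Nreg v p lastX, G.TargetFromE v p ξ1 lastX x →
      ¬ G.SourceToX v p ξ1 lastE lastX x)
    {w : V} {ρ : List E} (hρ : G.IsSimplePath w ρ t) (hw : w ∈ G.cycleVerts v p)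
    (hwS : idx w ≤ idx ξ1 ∨
      (w ∈ G.Nreg v p lastX ∧ ¬ G.SourceToX v p ξ1 lastE lastX w)) :
    ξ1 ∈ G.walkVerts w ρ := by
  by_cases hwξ : w = ξ1
  · simp [walkVerts_eq_cons, hwξ]
  replace hwS : idx w < idx ξ1 ∨
      (w ∈ G.Nreg v p lastX ∧ ¬ G.SourceToX v p ξ1 lastE lastX w) :=
    hwS.imp_left fun h => lt_of_le_of_ne h fun h => hwξ ((List.idxOf_inj hw).1 h)
  have hξX := hsd.firstExit_le_lastExit
  obtain ⟨e₀, he₀, hexit⟩ := hρ.exists_exitNode_tgt hw fun hexit => by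
    have := hsd.idxOf_mem_of_exitNode hexit
    rcases hwS with h | ⟨h, -⟩
    · omega
    · exact absurd h.2 (by omega)
  have hexitX := hsd.idxOf_mem_of_exitNode hexit
  rcases hwS with hwE | ⟨hwN, hwS⟩
  · obtain ⟨ρ₁, e, ρ₂, rfl, hy, hseg, hρ₂, hint⟩ :=
      hρ.exists_first_tgt (fun z => z ∈ G.cycleVerts v p) ⟨e₀, he₀, hexit.1⟩
    rw [walkVerts_append_cons_s10]
    refine List.mem_append_right _ ?_
    by_cases hyE : idx (G.tgt e) < idx ξ1
    · exact hsd.firstExit_mem_of_path_to_t hno hTS hρ₂ hy (Or.inl hyE.le)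
    have hint' : ∀ z ∈ G.walkVerts w (ρ₁ ++ [e]), z = w ∨ z = G.tgt e ∨
        ¬ (z ∈ G.cycleVerts v p ∧ idx z ≤ idx lastX) := fun z hz =>
      (hint z hz).imp_right (Or.imp_right fun h h' => h h'.1)
    rcases hsd.eq_firstExit_or_targetFromE hno hseg ⟨hw, hwE⟩ hy (by omega) hint' with h | h
    · simp [walkVerts_eq_cons, h]
    · exact hsd.firstExit_mem_of_path_to_t hno hTS hρ₂ hy (Or.inr ⟨h.1, hTS _ h.1 h.2⟩)
  · obtain ⟨ρ₁, e, ρ₂, rfl, ⟨hy, hyX⟩, hseg, hρ₂, hint⟩ :=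
      hρ.exists_first_tgt (fun z => z ∈ G.cycleVerts v p ∧ idx z ≤ idx lastX)
        ⟨e₀, he₀, hexit.1, hexitX.2⟩
    rw [walkVerts_append_cons_s10]
    refine List.mem_append_right _ ?_
    rcases hsd.eq_firstExit_or_lt_or_sourceToX hseg hwN hy hyX hint with h | h | h
    · simp [walkVerts_eq_cons, h]
    · exact hsd.firstExit_mem_of_path_to_t hno hTS hρ₂ hy (Or.inl h.le)
    · exact absurd h hwS
termination_by ρ.length
decreasing_by all_goals subst_vars; simp; omega

/-- `f` is `f_{EN}`, with `v` (the first entry node) standing in when no neutral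
hyper-chord leads from `E` to `N`. -/
def IsFirstTargetFromE (G : MultiDigraph V E) (v : V) (p : List E) (ξ1 lastX f : V) : Prop :=
  (f ∈ G.Nreg v p lastX ∧ G.TargetFromE v p ξ1 lastX f ∧
      ∀ f' ∈ G.Nreg v p lastX, G.TargetFromE v p ξ1 lastX f' →
        (G.cycleVerts v p).idxOf f ≤ (G.cycleVerts v p).idxOf f') ∨
    (f = v ∧ ¬ ∃ f' ∈ G.Nreg v p lastX, G.TargetFromE v p ξ1 lastX f')

/-- `ℓ` is `ℓ_{NX}`, with `lastX` standing in when no neutral hyper-chord leads from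
`N` to `X`. -/
def IsLastSourceToX (G : MultiDigraph V E) (v : V) (p : List E) (ξ1 lastE lastX ℓ : V) :
    Prop :=
  (ℓ ∈ G.Nreg v p lastX ∧ G.SourceToX v p ξ1 lastE lastX ℓ ∧
      ∀ ℓ' ∈ G.Nreg v p lastX, G.SourceToX v p ξ1 lastE lastX ℓ' →
        (G.cycleVerts v p).idxOf ℓ' ≤ (G.cycleVerts v p).idxOf ℓ) ∨
    (ℓ = lastX ∧ ¬ ∃ ℓ' ∈ G.Nreg v p lastX, G.SourceToX v p ξ1 lastE lastX ℓ')

theorem IsFirstTargetFromE.le_of_targetFromE (hf : G.IsFirstTargetFromE v p ξ1 lastX f)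
    (hx : x ∈ G.Nreg v p lastX) (hxT : G.TargetFromE v p ξ1 lastX x) :
    f ∈ G.Nreg v p lastX ∧ idx f ≤ idx x := by
  rcases hf with ⟨hf, -, hmin⟩ | ⟨-, hnone⟩
  exacts [⟨hf, hmin x hx hxT⟩, absurd ⟨x, hx, hxT⟩ hnone]

theorem IsLastSourceToX.le_of_sourceToX (hℓ : G.IsLastSourceToX v p ξ1 lastE lastX ℓ)
    (hx : x ∈ G.Nreg v p lastX) (hxS : G.SourceToX v p ξ1 lastE lastX x) :
    idx x ≤ idx ℓ := by
  rcases hℓ with ⟨-, -, hmax⟩ | ⟨-, hnone⟩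
  exacts [hmax x hx hxS, absurd ⟨x, hx, hxS⟩ hnone]

theorem IsLastSourceToX.lastExit_le (hℓ : G.IsLastSourceToX v p ξ1 lastE lastX ℓ) :
    idx lastX ≤ idx ℓ := by
  rcases hℓ with ⟨hℓ, -⟩ | ⟨rfl, -⟩
  exacts [hℓ.2.le, le_rfl]

theorem IsFirstTargetFromE.not_targetFromE (hc : G.IsSimpleCycle v p)
    (hf : G.IsFirstTargetFromE v p ξ1 lastX f) (hx : x ∈ G.Nreg v p lastX)
    (hxf : f ≠ v → idx x < idx f) : ¬ G.TargetFromE v p ξ1 lastX x := fun hxT => by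
  obtain ⟨hfN, hfx⟩ := hf.le_of_targetFromE hx hxT
  have := hxf (hc.ne_base_of_mem_Nreg hfN)
  omega

theorem IsLastSourceToX.not_sourceToX (hℓ : G.IsLastSourceToX v p ξ1 lastE lastX ℓ)
    (hx : x ∈ G.Nreg v p lastX) (hℓx : idx ℓ < idx x) :
    ¬ G.SourceToX v p ξ1 lastE lastX x :=
  fun hxS => absurd (hℓ.le_of_sourceToX hx hxS) (by omega)

end Regions

end MultiDigraph

open MultiDigraph in
theorem stmt10_general {V E : Type} [DecidableEq V] (G : MultiDigraph V E)
    (s t v : V) (p : List E) (ξ1 lastE lastX : V)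
    (hsd : G.SplitData s t v p ξ1 lastE lastX)
    (hno : ¬ ∃ x ∈ G.Ereg v p ξ1, ∃ y ∈ G.Xreg v p ξ1 lastE lastX, ∃ h,
      G.NeutralHyperChord v p x y h (G.Nreg v p lastX))
    (f ℓ : V)
    (hf : (f ∈ G.Nreg v p lastX ∧ G.TargetFromE v p ξ1 lastX f ∧
        ∀ f' ∈ G.Nreg v p lastX, G.TargetFromE v p ξ1 lastX f' →
          (G.cycleVerts v p).idxOf f ≤ (G.cycleVerts v p).idxOf f') ∨
      (f = v ∧ ¬ ∃ f' ∈ G.Nreg v p lastX, G.TargetFromE v p ξ1 lastX f'))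
    (hℓ : (ℓ ∈ G.Nreg v p lastX ∧ G.SourceToX v p ξ1 lastE lastX ℓ ∧
        ∀ ℓ' ∈ G.Nreg v p lastX, G.SourceToX v p ξ1 lastE lastX ℓ' →
          (G.cycleVerts v p).idxOf ℓ' ≤ (G.cycleVerts v p).idxOf ℓ) ∨
      (ℓ = lastX ∧ ¬ ∃ ℓ' ∈ G.Nreg v p lastX, G.SourceToX v p ξ1 lastE lastX ℓ')) :
    ∀ e ∈ p,
      ((f = v ∧ (G.cycleVerts v p).idxOf ℓ ≤ (G.cycleVerts v p).idxOf (G.src e)) ∨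
       (f ≠ v ∧ (G.cycleVerts v p).idxOf ℓ ≤ (G.cycleVerts v p).idxOf (G.src e) ∧
         G.tgt e ≠ v ∧
         (G.cycleVerts v p).idxOf (G.tgt e) ≤ (G.cycleVerts v p).idxOf f)) →
      ¬ G.EdgeIrredundant s t e := by
  rintro e he hbetween ⟨π, hπ, heπ⟩
  have hc := hsd.splitAt.1
  have hf : G.IsFirstTargetFromE v p ξ1 lastX f := hf
  have hℓ : G.IsLastSourceToX v p ξ1 lastE lastX ℓ := hℓ
  have hℓe : (G.cycleVerts v p).idxOf ℓ ≤ (G.cycleVerts v p).idxOf (G.src e) := by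
    rcases hbetween with ⟨-, h⟩ | ⟨-, h, -⟩ <;> exact h
  have hef : f ≠ v → (G.cycleVerts v p).idxOf (G.src e) < (G.cycleVerts v p).idxOf f := by
    intro hfv
    rcases hbetween with ⟨h, -⟩ | ⟨-, -, htv, h⟩
    · exact absurd h hfv
    · have := (hc.tgt_eq_or_idxOf_tgt he).resolve_left htv
      omega
  have := hℓ.lastExit_le
  have := hsd.firstExit_le_lastExit
  obtain ⟨π₁, π₂, rfl⟩ := List.append_of_mem heπ
  obtain ⟨hπ₁, hπ₂, hdisj⟩ := hπ.append_cons
  have hfrom := hsd.firstExit_mem_of_path_from_s hno hπ₁ (hc.src_mem he) (by omega)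
    fun hN => hf.not_targetFromE hc hN hef
  have hto := hsd.firstExit_mem_of_path_to_t hno
    (fun x hN hT hS => hf.not_targetFromE hc hN
      (fun hfv => (hℓ.le_of_sourceToX hN hS).trans_lt (hℓe.trans_lt (hef hfv))) hT)
    hπ₂ (hc.tgt_mem he) (by
      rcases hc.tgt_eq_or_idxOf_tgt he with hv | hsucc
      · exact Or.inl (by rw [hv, hc.idxOf_base]; omega)
      · have hN : G.tgt e ∈ G.Nreg v p lastX := ⟨hc.tgt_mem he, by omega⟩
        exact Or.inr ⟨hN, hℓ.not_sourceToX hN (by omega)⟩)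
  exact hdisj hfrom hto

open MultiDigraph in
/-- If a splittable simple cycle has no neutral hyper-chord from its entry
region `E` to its exit region `X`, then all edges of the cycle lying strictly
between `ℓ_{NX}` and `f_{EN}` (in the cyclic order) are redundant.  Here `f`
is `f_{EN}` (defaulting to the first entry node `v` if no neutral hyper-chord
from `E` to `N` exists) and `ℓ` is `ℓ_{NX}` (defaulting to the last exit node
`lastX` if no neutral hyper-chord from `N` to `X` exists). -/
theorem stmt10 {V E : Type} [DecidableEq V] (G : MultiDigraph V E)
    (s t v : V) (p : List E) (ξ1 lastE lastX : V)
    (hconn : G.STConnected s t)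
    (hsd : G.SplitData s t v p ξ1 lastE lastX)
    (hno : ¬ ∃ x ∈ G.Ereg v p ξ1, ∃ y ∈ G.Xreg v p ξ1 lastE lastX, ∃ h,
      G.NeutralHyperChord v p x y h (G.Nreg v p lastX))
    (f ℓ : V)
    (hf : (f ∈ G.Nreg v p lastX ∧ G.TargetFromE v p ξ1 lastX f ∧
        ∀ f' ∈ G.Nreg v p lastX, G.TargetFromE v p ξ1 lastX f' →
          (G.cycleVerts v p).idxOf f ≤ (G.cycleVerts v p).idxOf f') ∨
      (f = v ∧ ¬ ∃ f' ∈ G.Nreg v p lastX, G.TargetFromE v p ξ1 lastX f'))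
    (hℓ : (ℓ ∈ G.Nreg v p lastX ∧ G.SourceToX v p ξ1 lastE lastX ℓ ∧
        ∀ ℓ' ∈ G.Nreg v p lastX, G.SourceToX v p ξ1 lastE lastX ℓ' →
          (G.cycleVerts v p).idxOf ℓ' ≤ (G.cycleVerts v p).idxOf ℓ) ∨
      (ℓ = lastX ∧ ¬ ∃ ℓ' ∈ G.Nreg v p lastX, G.SourceToX v p ξ1 lastE lastX ℓ')) :
    ∀ e ∈ p,
      ((f = v ∧ (G.cycleVerts v p).idxOf ℓ ≤ (G.cycleVerts v p).idxOf (G.src e)) ∨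
       (f ≠ v ∧ (G.cycleVerts v p).idxOf ℓ ≤ (G.cycleVerts v p).idxOf (G.src e) ∧
         G.tgt e ≠ v ∧
         (G.cycleVerts v p).idxOf (G.tgt e) ≤ (G.cycleVerts v p).idxOf f)) →
      ¬ G.EdgeIrredundant s t e :=
  stmt10_general G s t v p ξ1 lastE lastX hsd hno f ℓ hf hℓ
end

section
/- If a net (G,s,t) is st-connected, then every simple cycle of G has at least one entry node and at least one exit node. -/
namespace MultiDigraph

variable {V E : Type} {G : MultiDigraph V E} {u v x : V} {p : List E} {C : Set V}

theorem IsWalk.exists_suffix_of_mem (h : G.IsWalk u p v) (hx : x ∈ G.walkVerts u p) :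
    ∃ p', G.IsWalk x p' v ∧ G.walkVerts x p' <:+ G.walkVerts u p := by
  induction p generalizing u with
  | nil =>
    obtain rfl : x = u := List.mem_singleton.mp hx
    exact ⟨[], h, List.suffix_refl _⟩
  | cons e p ih =>
    rcases List.mem_cons.mp hx with rfl | hx
    · exact ⟨e :: p, h, List.suffix_refl _⟩
    · obtain ⟨p', hp', hsuf⟩ := ih h.2 hx
      exact ⟨p', hp', hsuf.trans (List.suffix_cons _ _)⟩

/-- If the start vertex recurs on the simple path obtained from the tail, restart from its
occurrence there. -/
theorem IsWalk.exists_isSimplePath_subset (h : G.IsWalk u p v) :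
    ∃ q, G.IsSimplePath u q v ∧ G.walkVerts u q ⊆ G.walkVerts u p := by
  induction p generalizing u with
  | nil => exact ⟨[], ⟨h, List.nodup_singleton u⟩, List.Subset.refl _⟩
  | cons e p ih =>
    obtain ⟨q, ⟨hq, hnodup⟩, hsub⟩ := ih h.2
    have hsub' : G.walkVerts (G.tgt e) q ⊆ G.walkVerts u (e :: p) :=
      List.Subset.trans hsub (List.subset_cons_self _ _)
    by_cases hu : u ∈ G.walkVerts (G.tgt e) q
    · obtain ⟨q', hq', hsuf⟩ := hq.exists_suffix_of_mem hu
      exact ⟨q', ⟨hq', hnodup.sublist hsuf.sublist⟩, List.Subset.trans hsuf.subset hsub'⟩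
    · refine ⟨e :: q, ⟨⟨h.1, hq⟩, List.nodup_cons.mpr ⟨hu, hnodup⟩⟩, ?_⟩
      exact List.cons_subset_cons u hsub

theorem IsWalk.exists_walk_to_first_mem (h : G.IsWalk u p v) (hx : x ∈ G.walkVerts u p)
    (hxC : x ∈ C) :
    ∃ w ∈ C, ∃ p₁, G.IsWalk u p₁ w ∧ ∀ y ∈ G.walkVerts u p₁, y ∈ C → y = w := by
  induction p generalizing u with
  | nil =>
    obtain rfl : x = u := List.mem_singleton.mp hx
    exact ⟨x, hxC, [], rfl, fun y hy _ => List.mem_singleton.mp hy⟩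
  | cons e p ih =>
    by_cases hu : u ∈ C
    · exact ⟨u, hu, [], rfl, fun y hy _ => List.mem_singleton.mp hy⟩
    · have hx' : x ∈ G.walkVerts (G.tgt e) p :=
        (List.mem_cons.mp hx).resolve_left (by rintro rfl; exact hu hxC)
      obtain ⟨w, hw, p₁, hp₁, honly⟩ := ih h.2 hx'
      refine ⟨w, hw, e :: p₁, ⟨h.1, hp₁⟩, fun y hy hyC => ?_⟩
      rcases List.mem_cons.mp hy with rfl | hy
      · exact absurd hyC hu
      · exact honly y hy hyC

theorem IsWalk.exists_walk_from_last_mem (h : G.IsWalk u p v) (hx : x ∈ G.walkVerts u p)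
    (hxC : x ∈ C) :
    ∃ w ∈ C, ∃ p₂, G.IsWalk w p₂ v ∧ ∀ y ∈ G.walkVerts w p₂, y ∈ C → y = w := by
  induction p generalizing u x with
  | nil =>
    obtain rfl : x = u := List.mem_singleton.mp hx
    exact ⟨x, hxC, [], h, fun y hy _ => List.mem_singleton.mp hy⟩
  | cons e p ih =>
    by_cases hrest : ∃ y ∈ G.walkVerts (G.tgt e) p, y ∈ C
    · obtain ⟨y, hy, hyC⟩ := hrest
      exact ih h.2 hy hyC
    · simp only [not_exists, not_and] at hrest
      have hu : u ∈ C := by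
        rcases List.mem_cons.mp hx with rfl | hx
        · exact hxC
        · exact absurd hxC (hrest x hx)
      refine ⟨u, hu, e :: p, h, fun y hy hyC => ?_⟩
      rcases List.mem_cons.mp hy with rfl | hy
      · rfl
      · exact absurd hyC (hrest y hy)

theorem IsWalk.exists_entryNode {s t : V} (h : G.IsWalk s p t) (hx : x ∈ G.walkVerts s p)
    (hxC : x ∈ C) : ∃ u, G.EntryNode s C u := by
  obtain ⟨w, hw, p₁, hp₁, honly⟩ := h.exists_walk_to_first_mem hx hxC
  obtain ⟨q, hq, hsub⟩ := hp₁.exists_isSimplePath_subset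
  exact ⟨w, hw, q, hq, fun y hy => honly y (hsub hy)⟩

theorem IsWalk.exists_exitNode {s t : V} (h : G.IsWalk s p t) (hx : x ∈ G.walkVerts s p)
    (hxC : x ∈ C) : ∃ u, G.ExitNode t C u := by
  obtain ⟨w, hw, p₂, hp₂, honly⟩ := h.exists_walk_from_last_mem hx hxC
  obtain ⟨q, hq, hsub⟩ := hp₂.exists_isSimplePath_subset
  exact ⟨w, hw, q, hq, fun y hy => honly y (hsub hy)⟩

theorem mem_cycleSet_self (hp : p ≠ []) : v ∈ G.cycleSet v p := by
  obtain ⟨e, p, rfl⟩ := List.exists_cons_of_ne_nil hp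
  cases p <;> simp [cycleSet, cycleVerts, walkVerts]

end MultiDigraph

open MultiDigraph in
/-- In an `st`-connected net, every simple cycle has at least one entry node
and at least one exit node. -/
theorem stmt18 {V E : Type} (G : MultiDigraph V E) (s t : V)
    (hconn : G.STConnected s t) (v : V) (p : List E)
    (hC : G.IsSimpleCycle v p) :
    (∃ u, G.EntryNode s (G.cycleSet v p) u) ∧
    (∃ u, G.ExitNode t (G.cycleSet v p) u) := by
  have hv : v ∈ G.cycleSet v p := mem_cycleSet_self hC.2.1
  obtain ⟨p₀, hp₀, hvp₀⟩ := hconn v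
  exact ⟨hp₀.exists_entryNode hvp₀ hv, hp₀.exists_exitNode hvp₀ hv⟩
end
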